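/- arXiv:2201.02285 — 14 statements merged into one kernel-verified Lean document; each statement's English description precedes it below -/
import Mathlib

section
/- Let T be the tribonacci sequence defined by T_n = 0 for n < 2, T_2 = 1, and T_n = T_{n-1} + T_{n-2} + T_{n-3} for n ≥ 3. Define μ^{[12]} by μ^{[12]}_l = 0 for l < 2 and μ^{[12]}_l = μ^{[12]}_{l-1} + μ^{[12]}_{l-2} + μ^{[12]}_{l-3} + δ_{l,2} + δ_{l,4} for l ≥ 2 (where δ is the Kronecker delta). Then for all l ≥ 0, μ^{[12]}_l = T_l + T_{l-2} (with T of negative index taken to be 0). -/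
/-- μ^{[12]}_l = T_l + T_{l-2} where μ^{[12]} satisfies the given recurrence. -/
theorem stmt_0 (T : ℕ → ℤ) (hT0 : T 0 = 0) (hT1 : T 1 = 0) (hT2 : T 2 = 1)
    (hTrec : ∀ n, T (n + 3) = T (n + 2) + T (n + 1) + T n)
    (mu : ℕ → ℤ) (hmu0 : mu 0 = 0) (hmu1 : mu 1 = 0)
    (hmurec : ∀ l, 2 ≤ l → mu l = mu (l - 1) + mu (l - 2) + mu (l - 3)
      + (if l = 2 then 1 else 0) + (if l = 4 then 1 else 0)) :
    ∀ l, mu l = T l + T (l - 2) := by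
  have h2 := hmurec 2 (by norm_num)
  have h3 := hmurec 3 (by norm_num)
  have h4 := hmurec 4 (by norm_num)
  norm_num at h2 h3 h4
  have T3 := hTrec 0
  have T4 := hTrec 1
  intro l
  induction l using Nat.strong_induction_on with
  | _ l ih =>
    match l with
    | 0 => simp [hmu0, hT0]
    | 1 => simp [hmu1, hT1, hT0]
    | 2 => simp [h2, hmu0, hmu1, hT0, hT2]
    | 3 => simp [h3, h2, hmu0, hmu1, hT0, hT1, hT2, T3]
    | 4 => simp [h4, h3, h2, hmu0, hmu1, hT0, hT1, hT2, T3, T4]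
    | (n+5) =>
      have h := hmurec (n+5) (by omega)
      have e1 : n + 5 - 1 = n + 4 := by omega
      have e2 : n + 5 - 2 = n + 3 := by omega
      have e3 : n + 5 - 3 = n + 2 := by omega
      rw [e1, e2, e3, if_neg (by omega), if_neg (by omega)] at h
      have i4 := ih (n+4) (by omega)
      have i3 := ih (n+3) (by omega)
      have i2 := ih (n+2) (by omega)
      have e4 : n + 4 - 2 = n + 2 := by omega
      have e5 : n + 3 - 2 = n + 1 := by omega
      have e6 : n + 2 - 2 = n := by omega
      rw [e4] at i4; rw [e5] at i3; rw [e6] at i2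
      have tA := hTrec (n+2)
      have tB := hTrec n
      have eA : n + 2 + 2 = n + 4 := by omega
      have eB : n + 2 + 1 = n + 3 := by omega
      rw [eA, eB] at tA
      rw [e2]
      linarith
end

section
/- Let T be the tribonacci sequence (T_0 = T_1 = 0, T_2 = 1, T_n = T_{n-1} + T_{n-2} + T_{n-3}). Then for all n ≥ 0, T_n^2 = δ_{n,2} + T_{n-1}^2 + 3 T_{n-2}^2 + 9 T_{n-3}^2 + 4 ∑_{l=4}^{n-2} (T_l + T_{l-1}) T_{n-l}^2, where T at negative indices is 0 and the sum is empty if n−2 < 4. -/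
/-- Identity 1 of the paper. -/
theorem stmt_4 (T : ℕ → ℤ) (hT0 : T 0 = 0) (hT1 : T 1 = 0) (hT2 : T 2 = 1)
    (hTrec : ∀ n, T (n + 3) = T (n + 2) + T (n + 1) + T n) :
    ∀ n : ℕ, (T n)^2 = (if n = 2 then 1 else 0) + (T (n - 1))^2 + 3 * (T (n - 2))^2
      + 9 * (T (n - 3))^2
      + 4 * ∑ l ∈ Finset.Icc 4 (n - 2), (T l + T (l - 1)) * (T (n - l))^2 := by
  -- explicit values
  have hT3 : T 3 = 1 := by have h := hTrec 0; norm_num at h; rw [hT0, hT1, hT2] at h; linarith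
  have hT4 : T 4 = 2 := by have h := hTrec 1; norm_num at h; rw [hT1, hT2, hT3] at h; linarith
  have hT5 : T 5 = 4 := by have h := hTrec 2; norm_num at h; rw [hT2, hT3, hT4] at h; linarith
  have hT6 : T 6 = 7 := by have h := hTrec 3; norm_num at h; rw [hT3, hT4, hT5] at h; linarith
  have hT7 : T 7 = 13 := by have h := hTrec 4; norm_num at h; rw [hT4, hT5, hT6] at h; linarith
  have hT8 : T 8 = 24 := by have h := hTrec 5; norm_num at h; rw [hT5, hT6, hT7] at h; linarith
  -- the order-6 recurrence for squares
  have key6 : ∀ m : ℕ, (T (m+6))^2 = 2*(T (m+5))^2 + 3*(T (m+4))^2 + 6*(T (m+3))^2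
      - (T (m+2))^2 - (T m)^2 := by
    intro m
    have e6 := hTrec (m+3)
    have e5 := hTrec (m+2)
    have e4 := hTrec (m+1)
    have e3 := hTrec m
    simp only [show m+3+3 = m+6 by omega, show m+3+2 = m+5 by omega,
      show m+3+1 = m+4 by omega, show m+2+3 = m+5 by omega, show m+2+2 = m+4 by omega,
      show m+2+1 = m+3 by omega, show m+1+3 = m+4 by omega, show m+1+2 = m+3 by omega,
      show m+1+1 = m+2 by omega] at e6 e5 e4 e3
    rw [e6, e5, e4, e3]; ring
  -- conversion of the Icc sum to a reflected range sum
  have convlem : ∀ m : ℕ, 6 ≤ m →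
      ∑ l ∈ Finset.Icc 4 (m-2), (T l + T (l - 1)) * (T (m - l))^2
        = ∑ i ∈ Finset.range (m-5), (T (m-2-i) + T (m-2-i-1)) * (T (2+i))^2 := by
    intro m hm
    rw [show Finset.Icc 4 (m-2) = Finset.Ico 4 ((m-2)+1) by rw [Finset.Ico_add_one_right_eq_Icc]]
    rw [Finset.sum_Ico_eq_sum_range]
    rw [show (m-2)+1-4 = m-5 by omega]
    rw [← Finset.sum_range_reflect]
    apply Finset.sum_congr rfl
    intro i hi
    simp only [Finset.mem_range] at hi
    rw [show 4 + (m-5-1-i) = m-2-i by omega, show m - (m-2-i) = 2+i by omega]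
  -- the recurrence for the range sums
  have sumlem : ∀ k : ℕ,
      ∑ i ∈ Finset.range (k+4), (T (k+7-i) + T (k+7-i-1)) * (T (2+i))^2
      = ∑ i ∈ Finset.range (k+3), (T (k+6-i) + T (k+6-i-1)) * (T (2+i))^2
      + ∑ i ∈ Finset.range (k+2), (T (k+5-i) + T (k+5-i-1)) * (T (2+i))^2
      + ∑ i ∈ Finset.range (k+1), (T (k+4-i) + T (k+4-i-1)) * (T (2+i))^2
      + 2*(T (k+3))^2 + 3*(T (k+4))^2 + 3*(T (k+5))^2 := by
    intro k
    have split3 : ∀ (F : ℕ → ℤ), ∑ i ∈ Finset.range (k+4), F i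
        = (∑ i ∈ Finset.range (k+1), F i) + F (k+1) + F (k+2) + F (k+3) := by
      intro F; rw [Finset.sum_range_succ, Finset.sum_range_succ, Finset.sum_range_succ]
    have split2 : ∀ (F : ℕ → ℤ), ∑ i ∈ Finset.range (k+3), F i
        = (∑ i ∈ Finset.range (k+1), F i) + F (k+1) + F (k+2) := by
      intro F; rw [Finset.sum_range_succ, Finset.sum_range_succ]
    have split1 : ∀ (F : ℕ → ℤ), ∑ i ∈ Finset.range (k+2), F i
        = (∑ i ∈ Finset.range (k+1), F i) + F (k+1) := by
      intro F; rw [Finset.sum_range_succ]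
    rw [split3, split2, split1]
    have hpt : ∀ i ∈ Finset.range (k+1),
        (T (k+7-i) + T (k+7-i-1)) * (T (2+i))^2
        = (T (k+6-i) + T (k+6-i-1)) * (T (2+i))^2
        + (T (k+5-i) + T (k+5-i-1)) * (T (2+i))^2
        + (T (k+4-i) + T (k+4-i-1)) * (T (2+i))^2 := by
      intro i hi
      simp only [Finset.mem_range] at hi
      rw [show k+7-i = (k-i)+7 by omega, show (k-i)+7-1 = (k-i)+6 by omega,
        show k+6-i = (k-i)+6 by omega, show (k-i)+6-1 = (k-i)+5 by omega,
        show k+5-i = (k-i)+5 by omega, show (k-i)+5-1 = (k-i)+4 by omega,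
        show k+4-i = (k-i)+4 by omega, show (k-i)+4-1 = (k-i)+3 by omega]
      have e1 := hTrec ((k-i)+4)
      have e2 := hTrec ((k-i)+3)
      simp only [show (k-i)+4+3 = (k-i)+7 by omega, show (k-i)+4+2 = (k-i)+6 by omega,
        show (k-i)+4+1 = (k-i)+5 by omega, show (k-i)+3+3 = (k-i)+6 by omega,
        show (k-i)+3+2 = (k-i)+5 by omega, show (k-i)+3+1 = (k-i)+4 by omega] at e1 e2
      rw [e1, e2]; ring
    rw [Finset.sum_congr rfl hpt, Finset.sum_add_distrib, Finset.sum_add_distrib]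
    rw [show k+7-(k+3)-1 = 3 by omega, show k+7-(k+3) = 4 by omega,
      show k+7-(k+2)-1 = 4 by omega, show k+7-(k+2) = 5 by omega,
      show k+7-(k+1)-1 = 5 by omega, show k+7-(k+1) = 6 by omega,
      show k+6-(k+2)-1 = 3 by omega, show k+6-(k+2) = 4 by omega,
      show k+6-(k+1)-1 = 4 by omega, show k+6-(k+1) = 5 by omega,
      show k+5-(k+1)-1 = 3 by omega, show k+5-(k+1) = 4 by omega,
      show 2+(k+3) = k+5 by omega, show 2+(k+2) = k+4 by omega,
      show 2+(k+1) = k+3 by omega]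
    rw [hT3, hT4, hT5, hT6]
    ring
  -- main induction
  intro n
  induction n using Nat.strong_induction_on with
  | _ n ih =>
    rcases Nat.lt_or_ge n 9 with hn | hn
    · interval_cases n <;>
        norm_num [Finset.sum_insert, Finset.mem_insert, Finset.mem_singleton,
          show (Finset.Icc 4 2 : Finset ℕ) = ∅ by decide,
          show (Finset.Icc 4 3 : Finset ℕ) = ∅ by decide,
          show (Finset.Icc 4 4 : Finset ℕ) = {4} by decide,
          show (Finset.Icc 4 5 : Finset ℕ) = {4,5} by decide,
          show (Finset.Icc 4 6 : Finset ℕ) = {4,5,6} by decide,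
          hT0, hT1, hT2, hT3, hT4, hT5, hT6, hT7, hT8]
    · obtain ⟨m, rfl⟩ : ∃ m, n = m + 9 := ⟨n - 9, by omega⟩
      have ih8 := ih (m+8) (by omega)
      have ih7 := ih (m+7) (by omega)
      have ih6 := ih (m+6) (by omega)
      rw [convlem (m+8) (by omega)] at ih8
      rw [convlem (m+7) (by omega)] at ih7
      rw [convlem (m+6) (by omega)] at ih6
      rw [convlem (m+9) (by omega)]
      simp only [show m+9-1 = m+8 by omega, show m+9-2 = m+7 by omega,
        show m+9-3 = m+6 by omega, show m+9-5 = m+4 by omega,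
        show m+8-1 = m+7 by omega, show m+8-2 = m+6 by omega,
        show m+8-3 = m+5 by omega, show m+8-5 = m+3 by omega,
        show m+7-1 = m+6 by omega, show m+7-2 = m+5 by omega,
        show m+7-3 = m+4 by omega, show m+7-5 = m+2 by omega,
        show m+6-1 = m+5 by omega, show m+6-2 = m+4 by omega,
        show m+6-3 = m+3 by omega, show m+6-5 = m+1 by omega,
        if_neg (by omega : ¬ m+9 = 2), if_neg (by omega : ¬ m+8 = 2),
        if_neg (by omega : ¬ m+7 = 2), if_neg (by omega : ¬ m+6 = 2)] at *
      have hs := sumlem m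
      have hk := key6 (m+3)
      simp only [show m+3+6 = m+9 by omega, show m+3+5 = m+8 by omega,
        show m+3+4 = m+7 by omega, show m+3+3 = m+6 by omega,
        show m+3+2 = m+5 by omega] at hk
      linarith
end

section
/- Let T be the tribonacci sequence (T_0 = T_1 = 0, T_2 = 1, T_n = T_{n-1} + T_{n-2} + T_{n-3}). Then for all n ≥ 0, T_n^2 = δ_{n,2} − δ_{n,3} − δ_{n,4} − δ_{n,5} + 2T_{n-1}^2 + 3T_{n-2}^2 + 6T_{n-3}^2 − T_{n-4}^2 − T_{n-6}^2, where T at negative indices is 0. -/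
/-- Identity 2 of the paper. -/
theorem stmt_5 (T : ℕ → ℤ) (hT0 : T 0 = 0) (hT1 : T 1 = 0) (hT2 : T 2 = 1)
    (hTrec : ∀ n, T (n + 3) = T (n + 2) + T (n + 1) + T n) :
    ∀ n : ℕ, (T n)^2 = (if n = 2 then 1 else 0) - (if n = 3 then 1 else 0)
      - (if n = 4 then 1 else 0) - (if n = 5 then 1 else 0)
      + 2 * (T (n - 1))^2 + 3 * (T (n - 2))^2 + 6 * (T (n - 3))^2
      - (T (n - 4))^2 - (T (n - 6))^2 := by
  have hT3 : T 3 = 1 := by have h := hTrec 0; norm_num at h; omega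
  have hT4 : T 4 = 2 := by have h := hTrec 1; norm_num at h; omega
  have hT5 : T 5 = 4 := by have h := hTrec 2; norm_num at h; omega
  intro n
  match n with
  | 0 => norm_num [hT0]
  | 1 => norm_num [hT0, hT1]
  | 2 => norm_num [hT0, hT1, hT2]
  | 3 => norm_num [hT0, hT1, hT2, hT3]
  | 4 => norm_num [hT0, hT1, hT2, hT3, hT4]
  | 5 => norm_num [hT0, hT1, hT2, hT3, hT4, hT5]
  | (m + 6) =>
    simp only [if_neg (by omega : ¬ m + 6 = 2), if_neg (by omega : ¬ m + 6 = 3),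
      if_neg (by omega : ¬ m + 6 = 4), if_neg (by omega : ¬ m + 6 = 5),
      show m + 6 - 1 = m + 5 from rfl, show m + 6 - 2 = m + 4 from rfl,
      show m + 6 - 3 = m + 3 from rfl, show m + 6 - 4 = m + 2 from rfl,
      show m + 6 - 6 = m from rfl]
    rw [show m + 6 = m + 3 + 3 from rfl, hTrec (m + 3),
      show m + 3 + 2 = m + 2 + 3 from rfl, hTrec (m + 2),
      show m + 3 + 1 = m + 1 + 3 from rfl, hTrec (m + 1), hTrec m]
    ring
end

section
/- Let T be the tribonacci sequence (T_0 = T_1 = 0, T_2 = 1, T_n = T_{n-1} + T_{n-2} + T_{n-3}). Then for all n ≥ 0, T_{n+4}^2 = 1 + ∑_{k=0}^{n} [ 3T_{k+2}^2 + 9T_{k+1}^2 + 4 ∑_{i=2}^{k} (T_{k+4-i} + T_{k+3-i}) T_i^2 ], where inner sums with empty range are 0. -/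
lemma trib_aux (T : ℕ → ℤ) (hT0 : T 0 = 0) (hT1 : T 1 = 0) (hT2 : T 2 = 1)
    (hTrec : ∀ n, T (n + 3) = T (n + 2) + T (n + 1) + T n) :
    ∀ k : ℕ,
      (4 * ∑ i ∈ Finset.Icc 2 k, T (k + 4 - i) * (T i)^2
        = -4*(T (k+1))^2 - 2*(T (k+2))^2 + 2*T (k+1)*T (k+2) + 2*T (k+2)*T (k+3))
      ∧ (4 * ∑ i ∈ Finset.Icc 2 k, T (k + 3 - i) * (T i)^2
        = -4*(T (k+1))^2 + 2*T (k+1)*T (k+3))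
      ∧ (4 * ∑ i ∈ Finset.Icc 2 k, T (k + 2 - i) * (T i)^2
        = -2*(T (k+2))^2 - 2*T (k+1)*T (k+2) + 2*T (k+2)*T (k+3)) := by
  have hT3 : T 3 = 1 := by have h := hTrec 0; norm_num at h; omega
  have hT4 : T 4 = 2 := by have h := hTrec 1; norm_num at h; omega
  intro k
  induction k with
  | zero =>
    simp [hT1, hT2, hT3]
  | succ k ih =>
    obtain ⟨ih1, ih2, ih3⟩ := ih
    match k, ih1, ih2, ih3 with
    | 0, _, _, _ =>
      rw [show Finset.Icc 2 1 = (∅ : Finset ℕ) from rfl]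
      norm_num [hT2, hT3, hT4]
    | (m+1), ih1, ih2, ih3 =>
      set k := m + 1 with hk
      have h2k : 2 ≤ k + 1 := by omega
      have i1 : k + 1 + 4 - (k+1) = 4 := by omega
      have i2 : k + 1 + 3 - (k+1) = 3 := by omega
      have i3 : k + 1 + 2 - (k+1) = 2 := by omega
      have split1 : ∑ i ∈ Finset.Icc 2 (k+1), T (k + 1 + 4 - i) * (T i)^2
          = (∑ i ∈ Finset.Icc 2 k, T (k + 1 + 4 - i) * (T i)^2) + T 4 * (T (k+1))^2 := by
        rw [Finset.sum_Icc_succ_top h2k, i1]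
      have split2 : ∑ i ∈ Finset.Icc 2 (k+1), T (k + 1 + 3 - i) * (T i)^2
          = (∑ i ∈ Finset.Icc 2 k, T (k + 1 + 3 - i) * (T i)^2) + T 3 * (T (k+1))^2 := by
        rw [Finset.sum_Icc_succ_top h2k, i2]
      have split3 : ∑ i ∈ Finset.Icc 2 (k+1), T (k + 1 + 2 - i) * (T i)^2
          = (∑ i ∈ Finset.Icc 2 k, T (k + 1 + 2 - i) * (T i)^2) + T 2 * (T (k+1))^2 := by
        rw [Finset.sum_Icc_succ_top h2k, i3]
      have inner1 : ∑ i ∈ Finset.Icc 2 k, T (k + 1 + 4 - i) * (T i)^2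
          = ∑ i ∈ Finset.Icc 2 k,
            (T (k + 4 - i) * (T i)^2 + T (k + 3 - i) * (T i)^2 + T (k + 2 - i) * (T i)^2) := by
        apply Finset.sum_congr rfl
        intro i hi
        rw [Finset.mem_Icc] at hi
        have e0 : k + 1 + 4 - i = (k + 2 - i) + 3 := by omega
        have e1 : k + 4 - i = (k + 2 - i) + 2 := by omega
        have e2 : k + 3 - i = (k + 2 - i) + 1 := by omega
        rw [e0, e1, e2, hTrec]
        ring
      have inner2 : ∑ i ∈ Finset.Icc 2 k, T (k + 1 + 3 - i) * (T i)^2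
          = ∑ i ∈ Finset.Icc 2 k, T (k + 4 - i) * (T i)^2 := by
        rfl
      have inner3 : ∑ i ∈ Finset.Icc 2 k, T (k + 1 + 2 - i) * (T i)^2
          = ∑ i ∈ Finset.Icc 2 k, T (k + 3 - i) * (T i)^2 := by
        rfl
      have hd : T (k + 4) = T (k + 3) + T (k + 2) + T (k + 1) := by
        have := hTrec (k + 1)
        simpa [show k + 1 + 3 = k + 4 from by omega, show k + 1 + 2 = k + 3 from by omega,
          show k + 1 + 1 = k + 2 from by omega] using this
      rw [split1, split2, split3, inner1, inner2, inner3, Finset.sum_add_distrib,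
        Finset.sum_add_distrib, hT2, hT3, hT4]
      simp only [show k + 1 + 1 = k + 2 from by omega, show k + 1 + 2 = k + 3 from by omega,
        show k + 1 + 3 = k + 4 from by omega]
      refine ⟨?_, ?_, ?_⟩
      · linear_combination ih1 + ih2 + ih3 - 2 * T (k+3) * hd
      · linear_combination ih1 - 2 * T (k+2) * hd
      · linear_combination ih2 - 2 * T (k+3) * hd

/-- Identity 3 of the paper. -/
theorem stmt_6 (T : ℕ → ℤ) (hT0 : T 0 = 0) (hT1 : T 1 = 0) (hT2 : T 2 = 1)
    (hTrec : ∀ n, T (n + 3) = T (n + 2) + T (n + 1) + T n) :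
    ∀ n : ℕ, (T (n + 4))^2 = 1 + ∑ k ∈ Finset.range (n + 1),
      (3 * (T (k + 2))^2 + 9 * (T (k + 1))^2
        + 4 * ∑ i ∈ Finset.Icc 2 k, (T (k + 4 - i) + T (k + 3 - i)) * (T i)^2) := by
  have hT3 : T 3 = 1 := by have h := hTrec 0; norm_num at h; omega
  have hT4 : T 4 = 2 := by have h := hTrec 1; norm_num at h; omega
  intro n
  induction n with
  | zero => simp [hT1, hT2, hT4]
  | succ n ih =>
    rw [Finset.sum_range_succ, ← add_assoc, ← ih]
    simp only [show n + 1 + 1 = n + 2 from by omega, show n + 1 + 2 = n + 3 from by omega,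
      show n + 1 + 3 = n + 4 from by omega, show n + 1 + 4 = n + 5 from by omega]
    obtain ⟨h1, h2, _⟩ := trib_aux T hT0 hT1 hT2 hTrec (n+1)
    simp only [show n + 1 + 1 = n + 2 from by omega, show n + 1 + 2 = n + 3 from by omega,
      show n + 1 + 3 = n + 4 from by omega, show n + 1 + 4 = n + 5 from by omega] at h1 h2
    have hsplit : ∑ i ∈ Finset.Icc 2 (n+1), (T (n + 5 - i) + T (n + 4 - i)) * (T i)^2
        = (∑ i ∈ Finset.Icc 2 (n+1), T (n + 5 - i) * (T i)^2)
          + ∑ i ∈ Finset.Icc 2 (n+1), T (n + 4 - i) * (T i)^2 := by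
      rw [← Finset.sum_add_distrib]
      apply Finset.sum_congr rfl
      intro i _
      ring
    rw [hsplit]
    have hd2 : T (n + 5) = T (n + 4) + T (n + 3) + T (n + 2) := by
      have := hTrec (n + 2)
      simpa [show n + 2 + 3 = n + 5 from by omega, show n + 2 + 2 = n + 4 from by omega,
        show n + 2 + 1 = n + 3 from by omega] using this
    linear_combination -h1 - h2 + (T (n+5) + T (n+4) + T (n+3) + T (n+2)) * hd2
end

section
/- Let T be the tribonacci sequence (T_0 = T_1 = 0, T_2 = 1, T_n = T_{n-1} + T_{n-2} + T_{n-3}). Then for all n ≥ 0 and j ∈ {0,1}, T_{2(n+1)+j}^2 = 1 + ∑_{k=1}^{n} [ T_{2k+j+1}^2 + 2T_{2k+j}^2 + 9T_{2k+j-1}^2 + 4 ∑_{i=0}^{2k+j-4} (T_{2k+j-i} + T_{2k+j-i-1}) T_{i+2}^2 ], where sums with empty range are 0 and T at negative indices is 0. -/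
private lemma bcd (T : ℕ → ℤ) (hT0 : T 0 = 0) (hT1 : T 1 = 0) (hT2 : T 2 = 1)
    (hTrec : ∀ n, T (n + 3) = T (n + 2) + T (n + 1) + T n) :
    ∀ n : ℕ,
      2 * (∑ i ∈ Finset.range (n+1), T (n-i+2) * T (i+2)^2) = T (n+2) * T (n+4)
    ∧ 2 * (∑ i ∈ Finset.range (n+1), T (n-i+3) * T (i+2)^2)
        = T (n+3) * (T (n+2) + T (n+4) - T (n+3))
    ∧ 2 * (∑ i ∈ Finset.range (n+1), T (n-i+4) * T (i+2)^2)
        = T (n+2) * T (n+4) + 2 * T (n+3) * T (n+4) - 2 * T (n+3)^2 := by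
  have h3 : T 3 = 1 := by have := hTrec 0; simp [hT0, hT1, hT2] at this; omega
  have h4 : T 4 = 2 := by have := hTrec 1; simp [hT1, hT2, h3] at this; omega
  intro n
  induction n with
  | zero =>
    refine ⟨?_, ?_, ?_⟩ <;> simp [hT2, h3, h4]
  | succ n ih =>
    obtain ⟨hB, hC, hD⟩ := ih
    have shift : ∀ c : ℕ, ∑ i ∈ Finset.range (n+1), T (n+1-i+c) * T (i+2)^2
        = ∑ i ∈ Finset.range (n+1), T (n-i+(c+1)) * T (i+2)^2 := by
      intro c
      refine Finset.sum_congr rfl fun i hi => ?_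
      have hi' : i < n+1 := Finset.mem_range.mp hi
      have h : n+1-i+c = n-i+(c+1) := by omega
      rw [h]
    have hE : ∑ i ∈ Finset.range (n+1), T (n-i+5) * T (i+2)^2
        = (∑ i ∈ Finset.range (n+1), T (n-i+4) * T (i+2)^2)
        + (∑ i ∈ Finset.range (n+1), T (n-i+3) * T (i+2)^2)
        + (∑ i ∈ Finset.range (n+1), T (n-i+2) * T (i+2)^2) := by
      rw [← Finset.sum_add_distrib, ← Finset.sum_add_distrib]
      refine Finset.sum_congr rfl fun i hi => ?_
      have h : T (n-i+5) = T (n-i+4) + T (n-i+3) + T (n-i+2) := hTrec (n-i+2)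
      rw [h]; ring
    have r1 : T (n+5) = T (n+4) + T (n+3) + T (n+2) := hTrec (n+2)
    refine ⟨?_, ?_, ?_⟩
    · rw [Finset.sum_range_succ, shift 2]
      have h : n+1-(n+1)+2 = 2 := by omega
      rw [h, r1, hT2]
      linear_combination hC
    · rw [Finset.sum_range_succ, shift 3]
      have h : n+1-(n+1)+3 = 3 := by omega
      rw [h, r1, h3]
      linear_combination hD
    · rw [Finset.sum_range_succ, shift 4, hE]
      have h : n+1-(n+1)+4 = 4 := by omega
      rw [h, r1, h4]
      linear_combination hB + hC + hD

private lemma key (T : ℕ → ℤ) (hT0 : T 0 = 0) (hT1 : T 1 = 0) (hT2 : T 2 = 1)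
    (hTrec : ∀ n, T (n + 3) = T (n + 2) + T (n + 1) + T n) (m : ℕ) (hm : 2 ≤ m) :
    T (m+2)^2 = T m^2 + ((T (m+1))^2 + 2*(T m)^2 + 9*(T (m-1))^2
      + 4 * ∑ i ∈ Finset.range (m-3), (T (m-i) + T (m-i-1)) * (T (i+2))^2) := by
  have h3 : T 3 = 1 := by have := hTrec 0; simp [hT0, hT1, hT2] at this; omega
  have h4 : T 4 = 2 := by have := hTrec 1; simp [hT1, hT2, h3] at this; omega
  have h5 : T 5 = 4 := by have := hTrec 2; simp [hT2, h3, h4] at this; omega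
  match m, hm with
  | 2, _ => norm_num [hT1, hT2, h3, h4]
  | 3, _ => norm_num [hT2, h3, h4, h5]
  | (q+4), _ =>
    have hs : ∑ i ∈ Finset.range (q+4-3), (T (q+4-i) + T (q+4-i-1)) * (T (i+2))^2
        = (∑ i ∈ Finset.range (q+1), T (q-i+4) * T (i+2)^2)
        + (∑ i ∈ Finset.range (q+1), T (q-i+3) * T (i+2)^2) := by
      have hr : q+4-3 = q+1 := by omega
      rw [hr, ← Finset.sum_add_distrib]
      refine Finset.sum_congr rfl fun i hi => ?_
      have hi' : i < q+1 := Finset.mem_range.mp hi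
      have e1 : q+4-i = q-i+4 := by omega
      have e2 : q+4-i-1 = q-i+3 := by omega
      rw [e2, e1]; ring
    obtain ⟨hB, hC, hD⟩ := bcd T hT0 hT1 hT2 hTrec q
    have e3 : q+4-1 = q+3 := by omega
    have r1 : T (q+5) = T (q+4) + T (q+3) + T (q+2) := hTrec (q+2)
    have r2 : T (q+6) = T (q+5) + T (q+4) + T (q+3) := hTrec (q+3)
    have e4 : q+4+2 = q+6 := by omega
    have e5 : q+4+1 = q+5 := by omega
    rw [e3, e4, e5, hs, r2, r1]
    linear_combination (-2)*hC + (-2)*hD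

/-- Identity 4 of the paper. -/
theorem stmt_7 (T : ℕ → ℤ) (hT0 : T 0 = 0) (hT1 : T 1 = 0) (hT2 : T 2 = 1)
    (hTrec : ∀ n, T (n + 3) = T (n + 2) + T (n + 1) + T n) :
    ∀ n : ℕ, ∀ j : ℕ, j ≤ 1 →
      (T (2 * (n + 1) + j))^2 = 1 + ∑ k ∈ Finset.Icc 1 n,
        ((T (2 * k + j + 1))^2 + 2 * (T (2 * k + j))^2 + 9 * (T (2 * k + j - 1))^2
          + 4 * ∑ i ∈ Finset.range (2 * k + j - 3),
              (T (2 * k + j - i) + T (2 * k + j - i - 1)) * (T (i + 2))^2) := by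
  have h3 : T 3 = 1 := by have := hTrec 0; simp [hT0, hT1, hT2] at this; omega
  intro n
  induction n with
  | zero =>
    intro j hj
    interval_cases j <;> norm_num [hT2, h3]
  | succ n ih =>
    intro j hj
    rw [Finset.sum_Icc_succ_top (by omega : 1 ≤ n+1)]
    have H := ih j hj
    have e1 : 2*(n+1+1)+j = 2*(n+1)+j+2 := by ring
    rw [e1, ← add_assoc, ← H]
    have K := key T hT0 hT1 hT2 hTrec (2*(n+1)+j) (by omega)
    have e2 : 2*(n+1)+j+1 = 2*(n+1)+j+1 := rfl
    linarith [K]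
end

section
/- Let T be the tribonacci sequence (T_0 = T_1 = 0, T_2 = 1, T_n = T_{n-1} + T_{n-2} + T_{n-3}). Then for all n ≥ 0 and j ∈ {0,1,2}, T_{3n+2+j}^2 = 1 + 3δ_{j,2} + ∑_{k=1}^{n} [ T_{3k+j+1}^2 + 3T_{3k+j}^2 + 4 ∑_{i=0}^{3k+j-3} (T_{3k+j-i} + T_{3k+j-i-1}) T_{i+2}^2 ], where sums with empty range are 0. -/
open Finset

private lemma trib_sumrec (T : ℕ → ℤ) (hT0 : T 0 = 0) (hT1 : T 1 = 0) (hT2 : T 2 = 1)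
    (hTrec : ∀ n, T (n + 3) = T (n + 2) + T (n + 1) + T n) (m : ℕ) :
    ∑ i ∈ range (m+3), T (m+4-i) * T (i+2)^2 =
    (∑ i ∈ range (m+2), T (m+3-i) * T (i+2)^2)
    + (∑ i ∈ range (m+1), T (m+2-i) * T (i+2)^2)
    + (∑ i ∈ range m, T (m+1-i) * T (i+2)^2) + T (m+4)^2 := by
  rw [Finset.sum_range_succ]
  have h1 : ∀ i ∈ range (m+2), T (m+4-i) * T (i+2)^2
      = T (m+3-i) * T (i+2)^2 + T (m+2-i) * T (i+2)^2 + T (m+1-i) * T (i+2)^2 := by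
    intro i hi
    rw [Finset.mem_range] at hi
    have e : m+4-i = (m+1-i)+3 := by omega
    have e2 : (m+1-i)+2 = m+3-i := by omega
    have e1 : (m+1-i)+1 = m+2-i := by omega
    rw [e, hTrec, e2, e1]; ring
  rw [Finset.sum_congr rfl h1, Finset.sum_add_distrib, Finset.sum_add_distrib]
  have hb1 : ∑ i ∈ range (m+2), T (m+2-i) * T (i+2)^2
      = ∑ i ∈ range (m+1), T (m+2-i) * T (i+2)^2 := by
    rw [Finset.sum_range_succ, show m+2-(m+1) = 1 from by omega, hT1]; ring
  have hb2 : ∑ i ∈ range (m+2), T (m+1-i) * T (i+2)^2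
      = ∑ i ∈ range m, T (m+1-i) * T (i+2)^2 := by
    rw [Finset.sum_range_succ, Finset.sum_range_succ,
      show m+1-(m+1) = 0 from by omega, show m+1-m = 1 from by omega, hT0, hT1]; ring
  rw [hb1, hb2, show m+4-(m+2) = 2 from by omega, hT2]; ring

private lemma trib_keyA (T : ℕ → ℤ) (hT0 : T 0 = 0) (hT1 : T 1 = 0) (hT2 : T 2 = 1)
    (hTrec : ∀ n, T (n + 3) = T (n + 2) + T (n + 1) + T n) :
    ∀ n, 2 * ∑ i ∈ range n, T (n+1-i) * T (i+2)^2 = T (n+3) * T (n+1) := by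
  have T3 : T 3 = 1 := by have := hTrec 0; simp [hT0, hT1, hT2] at this; omega
  have T4 : T 4 = 2 := by have := hTrec 1; simp [hT1, hT2, T3] at this; omega
  have T5 : T 5 = 4 := by have := hTrec 2; simp [hT2, T3, T4] at this; omega
  have main : ∀ n, (2 * ∑ i ∈ range n, T (n+1-i) * T (i+2)^2 = T (n+3) * T (n+1))
      ∧ (2 * ∑ i ∈ range (n+1), T (n+2-i) * T (i+2)^2 = T (n+4) * T (n+2))
      ∧ (2 * ∑ i ∈ range (n+2), T (n+3-i) * T (i+2)^2 = T (n+5) * T (n+3)) := by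
    intro n
    induction n with
    | zero =>
      refine ⟨?_, ?_, ?_⟩ <;>
        simp [Finset.sum_range_succ, hT0, hT1, hT2, T3, T4, T5]
    | succ m ih =>
      obtain ⟨p0, p1, p2⟩ := ih
      refine ⟨p1, p2, ?_⟩
      have hrec : ∑ i ∈ range (m+3), T (m+4-i) * T (i+2)^2 =
          (∑ i ∈ range (m+2), T (m+3-i) * T (i+2)^2)
          + (∑ i ∈ range (m+1), T (m+2-i) * T (i+2)^2)
          + (∑ i ∈ range m, T (m+1-i) * T (i+2)^2) + T (m+4)^2 :=
        trib_sumrec T hT0 hT1 hT2 hTrec m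
      have h6 : T (m+6) = T (m+5) + T (m+4) + T (m+3) := hTrec (m+3)
      have h5 : T (m+5) = T (m+4) + T (m+3) + T (m+2) := hTrec (m+2)
      have h4 : T (m+4) = T (m+3) + T (m+2) + T (m+1) := hTrec (m+1)
      have goal : 2 * ∑ i ∈ range (m+3), T (m+4-i) * T (i+2)^2 = T (m+6) * T (m+4) := by
        rw [hrec]
        linear_combination p2 + p1 + p0 - T (m+4) * h6 - (T (m+4) - T (m+3)) * h5
          - T (m+3) * h4
      exact goal
  exact fun n => (main n).1

private lemma trib_step (T : ℕ → ℤ) (hT0 : T 0 = 0) (hT1 : T 1 = 0) (hT2 : T 2 = 1)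
    (hTrec : ∀ n, T (n + 3) = T (n + 2) + T (n + 1) + T n) (m : ℕ) :
    T (m+5)^2 = T (m+2)^2 + T (m+4)^2 + 3 * T (m+3)^2
      + 4 * ∑ i ∈ range (m+1), (T (m+3-i) + T (m+2-i)) * T (i+2)^2 := by
  have hsplit : ∑ i ∈ range (m+1), (T (m+3-i) + T (m+2-i)) * T (i+2)^2
      = (∑ i ∈ range (m+2), T (m+3-i) * T (i+2)^2)
        + (∑ i ∈ range (m+1), T (m+2-i) * T (i+2)^2) - T (m+3)^2 := by
    have : ∀ i ∈ range (m+1), (T (m+3-i) + T (m+2-i)) * T (i+2)^2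
        = T (m+3-i) * T (i+2)^2 + T (m+2-i) * T (i+2)^2 := by
      intro i _; ring
    have htop : ∑ i ∈ range (m+2), T (m+3-i) * T (i+2)^2
        = (∑ i ∈ range (m+1), T (m+3-i) * T (i+2)^2) + T (m+3)^2 := by
      rw [Finset.sum_range_succ, show m+3-(m+1) = 2 from by omega, hT2]; ring
    rw [Finset.sum_congr rfl this, Finset.sum_add_distrib, htop]
    ring
  have k1 : 2 * ∑ i ∈ range (m+2), T (m+3-i) * T (i+2)^2 = T (m+5) * T (m+3) :=
    trib_keyA T hT0 hT1 hT2 hTrec (m+2)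
  have k2 : 2 * ∑ i ∈ range (m+1), T (m+2-i) * T (i+2)^2 = T (m+4) * T (m+2) :=
    trib_keyA T hT0 hT1 hT2 hTrec (m+1)
  have h5 : T (m+5) = T (m+4) + T (m+3) + T (m+2) := hTrec (m+2)
  rw [hsplit]
  linear_combination -2*k1 - 2*k2 + (T (m+5) + T (m+4) - T (m+3) + T (m+2)) * h5

/-- Identity 5 of the paper. -/
theorem stmt_8 (T : ℕ → ℤ) (hT0 : T 0 = 0) (hT1 : T 1 = 0) (hT2 : T 2 = 1)
    (hTrec : ∀ n, T (n + 3) = T (n + 2) + T (n + 1) + T n) :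
    ∀ n : ℕ, ∀ j : ℕ, j ≤ 2 →
      (T (3 * n + 2 + j))^2 = 1 + 3 * (if j = 2 then 1 else 0) + ∑ k ∈ Finset.Icc 1 n,
        ((T (3 * k + j + 1))^2 + 3 * (T (3 * k + j))^2
          + 4 * ∑ i ∈ Finset.range (3 * k + j - 2),
              (T (3 * k + j - i) + T (3 * k + j - i - 1)) * (T (i + 2))^2) := by
  have T3 : T 3 = 1 := by have := hTrec 0; simp [hT0, hT1, hT2] at this; omega
  have T4 : T 4 = 2 := by have := hTrec 1; simp [hT1, hT2, T3] at this; omega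
  intro n
  induction n with
  | zero =>
    intro j hj
    interval_cases j <;> simp [hT2, T3, T4]
  | succ n ih =>
    intro j hj
    rw [Finset.sum_Icc_succ_top (by omega : 1 ≤ n + 1), ← add_assoc, ← ih j hj]
    -- normalize indices
    have hb : 3*(n+1)+j-2 = 3*n+j+1 := by omega
    rw [hb]
    have hsum : ∀ i ∈ Finset.range (3*n+j+1),
        (T (3*(n+1)+j-i) + T (3*(n+1)+j-i-1)) * T (i+2)^2
        = (T (3*n+j+3-i) + T (3*n+j+2-i)) * T (i+2)^2 := by
      intro i hi
      rw [show 3*(n+1)+j-i-1 = 3*n+j+2-i from by omega,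
        show 3*(n+1)+j-i = 3*n+j+3-i from by omega]
    rw [Finset.sum_congr rfl hsum,
      show 3*(n+1)+2+j = 3*n+j+5 from by ring,
      show 3*(n+1)+j+1 = 3*n+j+4 from by ring,
      show 3*(n+1)+j = 3*n+j+3 from by ring,
      show 3*n+2+j = 3*n+j+2 from by ring]
    linarith [trib_step T hT0 hT1 hT2 hTrec (3*n+j)]
end

section
/- Let T be the tribonacci sequence (T_0 = T_1 = 0, T_2 = 1, T_n = T_{n-1} + T_{n-2} + T_{n-3}). Then for all n ≥ 0, T_n^2 = T_n + ∑_{k=2}^{n-2} ∑_{l=2}^{k} [4(T_l + T_{l-1}) − 2δ_{l,2}] · T_{k-l+2}^2 · T_{n-k}, where sums with empty range are 0. -/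
section Aux

variable (T : ℕ → ℤ)

def bco (i : ℕ) : ℤ := 4 * (T (i+2) + T (i+1)) - 2 * (if i = 0 then 1 else 0)

def cc (k : ℕ) : ℤ := ∑ i ∈ Finset.range (k+1), bco T i * (T (k+2-i))^2

def SS (m : ℕ) : ℤ := ∑ i ∈ Finset.range (m+1), cc T i * T (m+2-i)

variable (hT0 : T 0 = 0) (hT1 : T 1 = 0) (hT2 : T 2 = 1)
  (hTrec : ∀ n, T (n + 3) = T (n + 2) + T (n + 1) + T n)

include hTrec in
lemma sqrec (n : ℕ) : (T (n+6))^2 = 2*(T (n+5))^2 + 3*(T (n+4))^2 + 6*(T (n+3))^2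
    - (T (n+2))^2 - (T n)^2 := by
  have h0 := hTrec n
  have h1 : T (n+4) = T (n+3) + T (n+2) + T (n+1) := hTrec (n+1)
  have h2 : T (n+5) = T (n+4) + T (n+3) + T (n+2) := hTrec (n+2)
  have h3 : T (n+6) = T (n+5) + T (n+4) + T (n+3) := hTrec (n+3)
  rw [h3, h2, h1, h0]; ring

include hTrec in
lemma brec (i : ℕ) : bco T (i+4) = bco T (i+3) + bco T (i+2) + bco T (i+1) := by
  simp only [bco, if_neg (by omega : ¬ i+4 = 0), if_neg (by omega : ¬ i+3 = 0),
    if_neg (by omega : ¬ i+2 = 0), if_neg (by omega : ¬ i+1 = 0)]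
  have h1 : T (i+6) = T (i+5) + T (i+4) + T (i+3) := hTrec (i+3)
  have h2 : T (i+5) = T (i+4) + T (i+3) + T (i+2) := hTrec (i+2)
  rw [show i+4+2 = i+6 from rfl, show i+4+1 = i+5 from rfl, show i+3+2 = i+5 from rfl,
      show i+3+1 = i+4 from rfl, show i+2+2 = i+4 from rfl, show i+2+1 = i+3 from rfl,
      show i+1+2 = i+3 from rfl, h1, h2]
  ring

include hT0 hT1 hT2 hTrec

lemma hT3 : T 3 = 1 := by have h := hTrec 0; rw [hT0, hT1, hT2] at h; simpa using h
lemma hT4 : T 4 = 2 := by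
  have h := hTrec 1; rw [hT1, hT2, hT3 T hT0 hT1 hT2 hTrec] at h; simpa using h
lemma hT5 : T 5 = 4 := by
  have h := hTrec 2; rw [hT2, hT3 T hT0 hT1 hT2 hTrec, hT4 T hT0 hT1 hT2 hTrec] at h
  simpa using h

lemma ccrec (k : ℕ) : cc T (k+4) = cc T (k+3) + cc T (k+2) + cc T (k+1)
    + 2*(T (k+6))^2 + 6*(T (k+5))^2 + 2*(T (k+4))^2 + 2*(T (k+3))^2 := by
  have h3 := hT3 T hT0 hT1 hT2 hTrec
  have h4 := hT4 T hT0 hT1 hT2 hTrec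
  have h5 := hT5 T hT0 hT1 hT2 hTrec
  have hb0 : bco T 0 = 2 := by simp [bco, hT1, hT2]
  have hb1 : bco T 1 = 8 := by norm_num [bco, hT2, h3]
  have hb2 : bco T 2 = 12 := by norm_num [bco, h3, h4]
  have hb3 : bco T 3 = 24 := by norm_num [bco, h4, h5]
  have e4 : cc T (k+4) = (∑ i ∈ Finset.range (k+1), bco T (i+4) * (T (k+2-i))^2)
      + bco T 3 * (T (k+3))^2 + bco T 2 * (T (k+4))^2 + bco T 1 * (T (k+5))^2
      + bco T 0 * (T (k+6))^2 := by
    show (∑ i ∈ Finset.range (k+4+1), bco T i * (T (k+4+2-i))^2) = _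
    rw [Finset.sum_range_succ' _ (k+4), Finset.sum_range_succ' _ (k+3),
        Finset.sum_range_succ' _ (k+2), Finset.sum_range_succ' _ (k+1)]
    have hcong : ∀ i ∈ Finset.range (k+1),
        bco T (i+1+1+1+1) * (T (k+4+2-(i+1+1+1+1)))^2
          = bco T (i+4) * (T (k+2-i))^2 := by
      intro i hi
      rw [show i+1+1+1+1 = i+4 from rfl, show k+4+2-(i+4) = k+2-i by omega]
    rw [Finset.sum_congr rfl hcong,
        show (0:ℕ)+1+1+1 = 3 from rfl, show (0:ℕ)+1+1 = 2 from rfl,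
        show (0:ℕ)+1 = 1 from rfl,
        show k+4+2-3 = k+3 by omega, show k+4+2-2 = k+4 by omega,
        show k+4+2-1 = k+5 by omega, show k+4+2-0 = k+6 by omega]
  have eA : cc T (k+3) = (∑ i ∈ Finset.range (k+1), bco T (i+3) * (T (k+2-i))^2)
      + bco T 2 * (T (k+3))^2 + bco T 1 * (T (k+4))^2 + bco T 0 * (T (k+5))^2 := by
    show (∑ i ∈ Finset.range (k+3+1), bco T i * (T (k+3+2-i))^2) = _
    rw [Finset.sum_range_succ' _ (k+3), Finset.sum_range_succ' _ (k+2),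
        Finset.sum_range_succ' _ (k+1)]
    have hcong : ∀ i ∈ Finset.range (k+1),
        bco T (i+1+1+1) * (T (k+3+2-(i+1+1+1)))^2 = bco T (i+3) * (T (k+2-i))^2 := by
      intro i hi
      rw [show i+1+1+1 = i+3 from rfl, show k+3+2-(i+3) = k+2-i by omega]
    rw [Finset.sum_congr rfl hcong,
        show (0:ℕ)+1+1 = 2 from rfl, show (0:ℕ)+1 = 1 from rfl,
        show k+3+2-2 = k+3 by omega, show k+3+2-1 = k+4 by omega,
        show k+3+2-0 = k+5 by omega]
  have eB : cc T (k+2) = (∑ i ∈ Finset.range (k+1), bco T (i+2) * (T (k+2-i))^2)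
      + bco T 1 * (T (k+3))^2 + bco T 0 * (T (k+4))^2 := by
    show (∑ i ∈ Finset.range (k+2+1), bco T i * (T (k+2+2-i))^2) = _
    rw [Finset.sum_range_succ' _ (k+2), Finset.sum_range_succ' _ (k+1)]
    have hcong : ∀ i ∈ Finset.range (k+1),
        bco T (i+1+1) * (T (k+2+2-(i+1+1)))^2 = bco T (i+2) * (T (k+2-i))^2 := by
      intro i hi
      rw [show i+1+1 = i+2 from rfl, show k+2+2-(i+2) = k+2-i by omega]
    rw [Finset.sum_congr rfl hcong,
        show (0:ℕ)+1 = 1 from rfl,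
        show k+2+2-1 = k+3 by omega, show k+2+2-0 = k+4 by omega]
  have eC : cc T (k+1) = (∑ i ∈ Finset.range (k+1), bco T (i+1) * (T (k+2-i))^2)
      + bco T 0 * (T (k+3))^2 := by
    show (∑ i ∈ Finset.range (k+1+1), bco T i * (T (k+1+2-i))^2) = _
    rw [Finset.sum_range_succ' _ (k+1)]
    have hcong : ∀ i ∈ Finset.range (k+1),
        bco T (i+1) * (T (k+1+2-(i+1)))^2 = bco T (i+1) * (T (k+2-i))^2 := by
      intro i hi
      rw [show k+1+2-(i+1) = k+2-i by omega]
    rw [Finset.sum_congr rfl hcong, show k+1+2-0 = k+3 by omega]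
  have esplit : (∑ i ∈ Finset.range (k+1), bco T (i+4) * (T (k+2-i))^2)
      = (∑ i ∈ Finset.range (k+1), bco T (i+3) * (T (k+2-i))^2)
      + (∑ i ∈ Finset.range (k+1), bco T (i+2) * (T (k+2-i))^2)
      + (∑ i ∈ Finset.range (k+1), bco T (i+1) * (T (k+2-i))^2) := by
    rw [← Finset.sum_add_distrib, ← Finset.sum_add_distrib]
    refine Finset.sum_congr rfl fun i _ => ?_
    rw [brec T hTrec i]; ring
  rw [e4, esplit]
  rw [eA, eB, eC] at *
  rw [hb0, hb1, hb2, hb3]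
  ring

lemma ccval : ∀ k, cc T k = (T (k+4))^2 - (T (k+3))^2 - (T (k+2))^2 - (T (k+1))^2 := by
  have h3 := hT3 T hT0 hT1 hT2 hTrec
  have h4 := hT4 T hT0 hT1 hT2 hTrec
  have h5 := hT5 T hT0 hT1 hT2 hTrec
  have h6 : T 6 = 7 := by have h := hTrec 3; rw [h3, h4, h5] at h; simpa using h
  have h7 : T 7 = 13 := by have h := hTrec 4; rw [h4, h5, h6] at h; simpa using h
  have hb0 : bco T 0 = 2 := by simp [bco, hT1, hT2]
  have hb1 : bco T 1 = 8 := by norm_num [bco, hT2, h3]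
  have hb2 : bco T 2 = 12 := by norm_num [bco, h3, h4]
  have hb3 : bco T 3 = 24 := by norm_num [bco, h4, h5]
  intro k
  induction k using Nat.strong_induction_on with
  | _ k IH =>
    match k with
    | 0 => norm_num [cc, Finset.sum_range_succ, hb0, hT1, hT2, h3, h4]
    | 1 => norm_num [cc, Finset.sum_range_succ, hb0, hb1, hT2, h3, h4, h5]
    | 2 => norm_num [cc, Finset.sum_range_succ, hb0, hb1, hb2, hT2, h3, h4, h5, h6]
    | 3 => norm_num [cc, Finset.sum_range_succ, hb0, hb1, hb2, hb3, hT2, h3, h4, h5, h6, h7]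
    | (k+4) =>
      have i1 := IH (k+3) (by omega)
      have i2 := IH (k+2) (by omega)
      have i3 := IH (k+1) (by omega)
      have hc := ccrec T hT0 hT1 hT2 hTrec k
      have hsq := sqrec T hTrec (k+2)
      rw [show k+2+6 = k+8 from rfl, show k+2+5 = k+7 from rfl, show k+2+4 = k+6 from rfl,
          show k+2+3 = k+5 from rfl, show k+2+2 = k+4 from rfl] at hsq
      rw [show k+3+4 = k+7 from rfl, show k+3+3 = k+6 from rfl,
          show k+3+2 = k+5 from rfl, show k+3+1 = k+4 from rfl] at i1
      rw [show k+2+4 = k+6 from rfl, show k+2+3 = k+5 from rfl,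
          show k+2+2 = k+4 from rfl, show k+2+1 = k+3 from rfl] at i2
      rw [show k+1+4 = k+5 from rfl, show k+1+3 = k+4 from rfl,
          show k+1+2 = k+3 from rfl, show k+1+1 = k+2 from rfl] at i3
      rw [show k+4+4 = k+8 from rfl, show k+4+3 = k+7 from rfl,
          show k+4+2 = k+6 from rfl, show k+4+1 = k+5 from rfl,
          hc, i1, i2, i3]
      linarith [hsq]

lemma ssrec (m : ℕ) : SS T (m+3) = SS T (m+2) + SS T (m+1) + SS T m + cc T (m+3) := by
  have e : SS T (m+3) = (∑ i ∈ Finset.range (m+3), cc T i * T (m+5-i)) + cc T (m+3) * T 2 := by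
    show (∑ i ∈ Finset.range (m+3+1), cc T i * T (m+3+2-i)) = _
    rw [Finset.sum_range_succ, show m+3+2-(m+3) = 2 by omega]
  have esplit : (∑ i ∈ Finset.range (m+3), cc T i * T (m+5-i))
      = (∑ i ∈ Finset.range (m+3), cc T i * T (m+4-i))
      + (∑ i ∈ Finset.range (m+3), cc T i * T (m+3-i))
      + (∑ i ∈ Finset.range (m+3), cc T i * T (m+2-i)) := by
    rw [← Finset.sum_add_distrib, ← Finset.sum_add_distrib]
    refine Finset.sum_congr rfl fun i hi => ?_
    simp only [Finset.mem_range] at hi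
    have h := hTrec (m+2-i)
    rw [show m+2-i+3 = m+5-i by omega, show m+2-i+2 = m+4-i by omega,
        show m+2-i+1 = m+3-i by omega] at h
    rw [h]; ring
  have eP : (∑ i ∈ Finset.range (m+3), cc T i * T (m+4-i)) = SS T (m+2) := by
    show _ = (∑ i ∈ Finset.range (m+2+1), cc T i * T (m+2+2-i))
    rfl
  have eQ : (∑ i ∈ Finset.range (m+3), cc T i * T (m+3-i)) = SS T (m+1) := by
    show (∑ i ∈ Finset.range (m+2+1), cc T i * T (m+3-i))
        = (∑ i ∈ Finset.range (m+1+1), cc T i * T (m+1+2-i))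
    rw [Finset.sum_range_succ, show m+3-(m+2) = 1 by omega, hT1, mul_zero, add_zero]
  have eR : (∑ i ∈ Finset.range (m+3), cc T i * T (m+2-i)) = SS T m := by
    show (∑ i ∈ Finset.range (m+2+1), cc T i * T (m+2-i))
        = (∑ i ∈ Finset.range (m+1), cc T i * T (m+2-i))
    rw [Finset.sum_range_succ, Finset.sum_range_succ,
        show m+2-(m+2) = 0 by omega, hT0, mul_zero, add_zero,
        show m+2-(m+1) = 1 by omega, hT1, mul_zero, add_zero]
  rw [e, esplit, eP, eQ, eR, hT2]; ring

lemma main_aux : ∀ n, (T (n+4))^2 = T (n+4) + SS T n := by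
  have h3 := hT3 T hT0 hT1 hT2 hTrec
  have h4 := hT4 T hT0 hT1 hT2 hTrec
  have h5 := hT5 T hT0 hT1 hT2 hTrec
  have h6 : T 6 = 7 := by have h := hTrec 3; rw [h3, h4, h5] at h; simpa using h
  have hcv := ccval T hT0 hT1 hT2 hTrec
  have hc0 : cc T 0 = 2 := by rw [hcv 0]; norm_num [h3, h4, hT2, hT1]
  have hc1 : cc T 1 = 10 := by rw [hcv 1]; norm_num [h3, h4, h5, hT2]
  have hc2 : cc T 2 = 28 := by rw [hcv 2]; norm_num [h3, h4, h5, h6]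
  intro n
  induction n using Nat.strong_induction_on with
  | _ n IH =>
    match n with
    | 0 => norm_num [SS, Finset.sum_range_succ, hc0, hT2, h4]
    | 1 => norm_num [SS, Finset.sum_range_succ, hc0, hc1, hT2, h3, h5]
    | 2 => norm_num [SS, Finset.sum_range_succ, hc0, hc1, hc2, hT2, h3, h4, h6]
    | (m+3) =>
      have i1 := IH (m+2) (by omega)
      have i2 := IH (m+1) (by omega)
      have i3 := IH m (by omega)
      have hs := ssrec T hT0 hT1 hT2 hTrec m
      have hcc := hcv (m+3)
      have ht := hTrec (m+4)
      rw [show m+2+4 = m+6 from rfl] at i1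
      rw [show m+1+4 = m+5 from rfl] at i2
      rw [show m+3+4 = m+7 from rfl, show m+3+3 = m+6 from rfl,
          show m+3+2 = m+5 from rfl, show m+3+1 = m+4 from rfl] at hcc
      rw [show m+4+3 = m+7 from rfl, show m+4+2 = m+6 from rfl,
          show m+4+1 = m+5 from rfl] at ht
      rw [show m+3+4 = m+7 from rfl, hs, hcc]
      linarith [i1, i2, i3, ht]

omit hT0 hT1 hT2 hTrec in
lemma icc_to_range (f : ℕ → ℤ) (m : ℕ) :
    ∑ l ∈ Finset.Icc 2 (m+2), f l = ∑ i ∈ Finset.range (m+1), f (i+2) := by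
  induction m with
  | zero => simp
  | succ m ih =>
    show ∑ l ∈ Finset.Icc 2 ((m+2)+1), f l = ∑ i ∈ Finset.range ((m+1)+1), f (i+2)
    rw [Finset.sum_Icc_succ_top (by omega), Finset.sum_range_succ, ih]

end Aux

/-- Identity 6 of the paper. -/
theorem stmt_9 (T : ℕ → ℤ) (hT0 : T 0 = 0) (hT1 : T 1 = 0) (hT2 : T 2 = 1)
    (hTrec : ∀ n, T (n + 3) = T (n + 2) + T (n + 1) + T n) :
    ∀ n : ℕ, (T n)^2 = T n + ∑ k ∈ Finset.Icc 2 (n - 2), ∑ l ∈ Finset.Icc 2 k,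
      (4 * (T l + T (l - 1)) - 2 * (if l = 2 then 1 else 0))
        * (T (k - l + 2))^2 * T (n - k) := by
  have h3 := hT3 T hT0 hT1 hT2 hTrec
  intro n
  match n with
  | 0 => rw [Finset.Icc_eq_empty (by omega)]; simp [hT0]
  | 1 => rw [Finset.Icc_eq_empty (by omega)]; simp [hT1]
  | 2 => rw [Finset.Icc_eq_empty (by omega)]; simp [hT2]
  | 3 => rw [Finset.Icc_eq_empty (by omega)]; simp [h3]
  | (m+4) =>
    have key : (∑ k ∈ Finset.Icc 2 (m+4-2), ∑ l ∈ Finset.Icc 2 k,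
        (4 * (T l + T (l - 1)) - 2 * (if l = 2 then 1 else 0))
          * (T (k - l + 2))^2 * T (m+4-k)) = SS T m := by
      rw [show m+4-2 = m+2 by omega, icc_to_range _ m]
      refine Finset.sum_congr rfl fun i hi => ?_
      simp only [Finset.mem_range] at hi
      rw [icc_to_range _ i]
      show _ = cc T i * T (m+2-i)
      simp only [cc]
      rw [Finset.sum_mul]
      refine Finset.sum_congr rfl fun j hj => ?_
      simp only [Finset.mem_range] at hj
      rw [show (j:ℕ)+2-1 = j+1 by omega, show (i+2)-(j+2)+2 = i+2-j by omega,
          show m+4-(i+2) = m+2-i by omega]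
      simp only [bco]
      by_cases h : j = 0
      · simp [h]
      · rw [if_neg h, if_neg (by omega : ¬ j+2 = 2)]
    rw [key]
    exact main_aux T hT0 hT1 hT2 hTrec m
end

section
/- Let T be the tribonacci sequence (T_0 = T_1 = 0, T_2 = 1, T_n = T_{n-1} + T_{n-2} + T_{n-3}) and F the Fibonacci sequence (F_0 = 0, F_1 = 1, F_n = F_{n-1} + F_{n-2}). Then for all n ≥ 0, T_{n+2}^2 = F_{n+1}^2 + ∑_{k=3}^{n} ∑_{l=3}^{k} [4(T_l + T_{l-1}) + δ_{l,3} − 2] · T_{k-l+2}^2 · F_{n-k+1}^2, where sums with empty range are 0. -/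
/-- Telescoping certificate for the inner (tribonacci) convolution. -/
def tribPhi (u0 u1 u2 v0 v1 v2 : ℤ) : ℤ :=
  u0*(-4*v0*v1+4*v0*v2-4*v1^2-4*v1*v2) + u1*(-8*v0*v1-8*v1^2)
  + u2*(4*v0*v1-4*v0*v2+4*v1^2-4*v1*v2) - v0^2 + 2*v0*v2 + 4*v1*v2 - v2^2

/-- Telescoping certificate for the outer (fibonacci) convolution. -/
def tribPsi (p0 p1 p2 q0 q1 : ℤ) : ℤ :=
  4*p0^2*q0^2 - 2*p0^2*q0*q1 + 4*p0*p2*q0*q1 - 8*p1^2*q0*q1 + 4*p1^2*q1^2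
  + 8*p1*p2*q0*q1 - 2*p2^2*q0*q1 + 2*q0*q1

lemma trib_key (u0 u1 u2 u3 v0 v1 v2 v3 : ℤ) (hu : u3 = u2 + u1 + u0)
    (hv : v3 = v2 + v1 + v0) :
    2 * ((4 * (u1 + u0) - 2) * v2^2)
      = tribPhi u1 u2 u3 v0 v1 v2 - tribPhi u0 u1 u2 v1 v2 v3 := by
  subst hu hv; simp only [tribPhi]; ring

lemma fib_key (p0 p1 p2 p3 q0 q1 q2 : ℤ) (hp : p3 = p2 + p1 + p0)
    (hq : q2 = q1 + q0) :
    2*(-p0^2+2*p1^2+3*p2^2-2*p0*p2-4*p1*p2-1)*q1^2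
      = tribPsi p1 p2 p3 q0 q1 - tribPsi p0 p1 p2 q1 q2 := by
  subst hp hq; simp only [tribPsi]; ring

lemma trib_inner (T : ℕ → ℤ) (hT0 : T 0 = 0) (hT1 : T 1 = 0) (hT2 : T 2 = 1)
    (hTrec : ∀ n, T (n + 3) = T (n + 2) + T (n + 1) + T n) (k : ℕ) :
    2 * (∑ l ∈ Finset.Icc 3 (k+3),
        (4 * (T l + T (l - 1)) + (if l = 3 then 1 else 0) - 2) * (T (k + 3 - l + 2))^2)
      = -T (k+3)^2 + 2*T (k+4)^2 + 3*T (k+5)^2 - 2*T (k+3)*T (k+5)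
          - 4*T (k+4)*T (k+5) - 1 := by
  have hT3 : T 3 = 1 := by have h := hTrec 0; rw [hT0, hT1, hT2] at h; simpa using h
  have hT4 : T 4 = 2 := by have h := hTrec 1; rw [hT1, hT2, hT3] at h; simpa using h
  rw [← Finset.Ico_add_one_right_eq_Icc, Finset.sum_Ico_eq_sum_range, show (k+3+1 - 3) = k+1 from by omega]
  have expand : ∀ i ∈ Finset.range (k+1),
      (4 * (T (3+i) + T (3+i-1)) + (if 3+i = 3 then 1 else 0) - 2) * (T (k+3-(3+i)+2))^2
        = (4*(T (i+3) + T (i+2)) - 2) * (T (k-i+2))^2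
          + (if i = 0 then (T (k+2))^2 else 0) := by
    intro i _
    rw [show k+3-(3+i)+2 = k-i+2 from by omega, show 3+i-1 = i+2 from by omega,
        show 3+i = i+3 from by omega]
    by_cases h : i = 0
    · subst h; simp; ring
    · rw [if_neg (by omega), if_neg h]; ring
  rw [Finset.sum_congr rfl expand, Finset.sum_add_distrib, Finset.sum_ite_eq' (Finset.range (k+1)) 0,
      if_pos (by simp)]
  have tele := Finset.sum_range_sub
      (fun i => tribPhi (T (i+2)) (T (i+3)) (T (i+4)) (T (k+1-i)) (T (k+2-i)) (T (k+3-i))) (k+1)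
  have step : ∀ i ∈ Finset.range (k+1),
      2 * ((4*(T (i+3) + T (i+2)) - 2) * (T (k-i+2))^2)
        = (fun i => tribPhi (T (i+2)) (T (i+3)) (T (i+4)) (T (k+1-i)) (T (k+2-i)) (T (k+3-i))) (i+1)
          - (fun i => tribPhi (T (i+2)) (T (i+3)) (T (i+4)) (T (k+1-i)) (T (k+2-i)) (T (k+3-i))) i := by
    intro i hi
    simp only [Finset.mem_range] at hi
    have hik : i ≤ k := by omega
    simp only []
    rw [show i+1+2 = i+3 from by omega, show i+1+3 = i+4 from by omega,
        show i+1+4 = i+5 from by omega, show k+1-(i+1) = k-i from by omega,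
        show k+2-(i+1) = k-i+1 from by omega, show k+3-(i+1) = k-i+2 from by omega,
        show k+1-i = k-i+1 from by omega, show k+2-i = k-i+2 from by omega,
        show k+3-i = k-i+3 from by omega]
    exact trib_key (T (i+2)) (T (i+3)) (T (i+4)) (T (i+5))
      (T (k-i)) (T (k-i+1)) (T (k-i+2)) (T (k-i+3)) (hTrec (i+2)) (hTrec (k-i))
  have h2 : 2 * ∑ i ∈ Finset.range (k+1), (4*(T (i+3) + T (i+2)) - 2) * (T (k-i+2))^2
      = tribPhi (T (k+1+2)) (T (k+1+3)) (T (k+1+4)) (T (k+1-(k+1))) (T (k+2-(k+1))) (T (k+3-(k+1)))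
        - tribPhi (T 2) (T 3) (T 4) (T (k+1-0)) (T (k+2-0)) (T (k+3-0)) := by
    rw [Finset.mul_sum, Finset.sum_congr rfl step, tele]
  rw [show k+1+2 = k+3 from by omega, show k+1+3 = k+4 from by omega,
      show k+1+4 = k+5 from by omega, show k+1-(k+1) = 0 from by omega,
      show k+2-(k+1) = 1 from by omega, show k+3-(k+1) = 2 from by omega,
      show k+1-0 = k+1 from by omega, show k+2-0 = k+2 from by omega,
      show k+3-0 = k+3 from by omega] at h2
  have r5 : T (k+5) = T (k+4) + T (k+3) + T (k+2) := hTrec (k+2)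
  have r4 : T (k+4) = T (k+3) + T (k+2) + T (k+1) := hTrec (k+1)
  have r3 : T (k+3) = T (k+2) + T (k+1) + T k := hTrec k
  rw [mul_add, h2, hT0, hT1, hT2, hT3, hT4]
  rw [r5, r4, r3]
  simp only [tribPhi]; ring

/-- Identity 7 of the paper, relating tribonacci and Fibonacci numbers. -/
theorem stmt_10 (T : ℕ → ℤ) (hT0 : T 0 = 0) (hT1 : T 1 = 0) (hT2 : T 2 = 1)
    (hTrec : ∀ n, T (n + 3) = T (n + 2) + T (n + 1) + T n)
    (F : ℕ → ℤ) (hF0 : F 0 = 0) (hF1 : F 1 = 1)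
    (hFrec : ∀ n, F (n + 2) = F (n + 1) + F n) :
    ∀ n : ℕ, (T (n + 2))^2 = (F (n + 1))^2 + ∑ k ∈ Finset.Icc 3 n, ∑ l ∈ Finset.Icc 3 k,
      (4 * (T l + T (l - 1)) + (if l = 3 then 1 else 0) - 2)
        * (T (k - l + 2))^2 * (F (n - k + 1))^2 := by
  have hT3 : T 3 = 1 := by have h := hTrec 0; rw [hT0, hT1, hT2] at h; simpa using h
  have hT4 : T 4 = 2 := by have h := hTrec 1; rw [hT1, hT2, hT3] at h; simpa using h
  have hT5 : T 5 = 4 := by have h := hTrec 2; rw [hT2, hT3, hT4] at h; simpa using h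
  have hF2 : F 2 = 1 := by have h := hFrec 0; rw [hF0, hF1] at h; simpa using h
  have hF3 : F 3 = 2 := by have h := hFrec 1; rw [hF1, hF2] at h; simpa using h
  intro n
  match n with
  | 0 =>
    rw [show Finset.Icc 3 0 = ∅ from by decide, Finset.sum_empty, hT2, hF1]; ring
  | 1 =>
    rw [show Finset.Icc 3 1 = ∅ from by decide, Finset.sum_empty, hT3, hF2]; ring
  | 2 =>
    rw [show Finset.Icc 3 2 = ∅ from by decide, Finset.sum_empty, hT4, hF3]; ring
  | (m+3) =>
    simp only [← Finset.sum_mul]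
    rw [show m+3+2 = m+5 from by omega, show m+3+1 = m+4 from by omega]
    suffices h4 : 4 * (∑ k ∈ Finset.Icc 3 (m+3),
        (∑ l ∈ Finset.Icc 3 k,
          (4 * (T l + T (l - 1)) + (if l = 3 then 1 else 0) - 2) * (T (k - l + 2))^2)
          * (F (m+3-k+1))^2) = 4*(T (m+5))^2 - 4*(F (m+4))^2 by linarith
    rw [← Finset.Ico_add_one_right_eq_Icc, Finset.sum_Ico_eq_sum_range, show (m+3+1 - 3) = m+1 from by omega]
    have tele := Finset.sum_range_sub
      (fun i => tribPsi (T (i+3)) (T (i+4)) (T (i+5)) (F (m+1-i)) (F (m+2-i))) (m+1)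
    have step : ∀ i ∈ Finset.range (m+1),
        4 * ((∑ l ∈ Finset.Icc 3 (3+i),
          (4 * (T l + T (l - 1)) + (if l = 3 then 1 else 0) - 2) * (T (3+i-l+2))^2)
            * (F (m+3-(3+i)+1))^2)
        = (fun i => tribPsi (T (i+3)) (T (i+4)) (T (i+5)) (F (m+1-i)) (F (m+2-i))) (i+1)
          - (fun i => tribPsi (T (i+3)) (T (i+4)) (T (i+5)) (F (m+1-i)) (F (m+2-i))) i := by
      intro i hi
      simp only [Finset.mem_range] at hi
      have him : i ≤ m := by omega
      simp only []
      rw [show (3+i : ℕ) = i+3 from by omega, show m+3-(i+3)+1 = m-i+1 from by omega,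
          show i+1+3 = i+4 from by omega, show i+1+4 = i+5 from by omega,
          show i+1+5 = i+6 from by omega, show m+1-(i+1) = m-i from by omega,
          show m+2-(i+1) = m-i+1 from by omega, show m+1-i = m-i+1 from by omega,
          show m+2-i = m-i+2 from by omega]
      have hi2 := trib_inner T hT0 hT1 hT2 hTrec i
      have hkey := fib_key (T (i+3)) (T (i+4)) (T (i+5)) (T (i+6))
        (F (m-i)) (F (m-i+1)) (F (m-i+2)) (hTrec (i+3)) (hFrec (m-i))
      linear_combination 2 * (F (m-i+1))^2 * hi2 + hkey
    rw [Finset.mul_sum, Finset.sum_congr rfl step, tele]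
    rw [show m+1+3 = m+4 from by omega, show m+1+4 = m+5 from by omega,
        show m+1+5 = m+6 from by omega, show m+1-(m+1) = 0 from by omega,
        show m+2-(m+1) = 1 from by omega, show m+1-0 = m+1 from by omega,
        show m+2-0 = m+2 from by omega, hF0, hF1, hT3, hT4, hT5]
    have r4 : F (m+4) = F (m+3) + F (m+2) := hFrec (m+2)
    have r3 : F (m+3) = F (m+2) + F (m+1) := hFrec (m+1)
    rw [r4, r3]
    simp only [tribPsi]; ring
end

section
/- Let T be the tribonacci sequence (T_0 = T_1 = 0, T_2 = 1, T_n = T_{n-1} + T_{n-2} + T_{n-3}). Let c be the Narayana's cows sequence defined by c_n = 0 for n < 0, c_0 = 1, and c_n = c_{n-1} + c_{n-3} for n ≥ 1. Let p be the Padovan sequence defined by p_n = 0 for n < 0, p_0 = 1, and p_n = p_{n-2} + p_{n-3} for n ≥ 1. Then for all n ≥ 0, T_{n+2}^2 = c_n^2 + ∑_{k=2}^{n} ∑_{l=2}^{k} [4(T_l + T_{l-1}) − δ_{l,2} − 2p_{l-1}] · T_{k-l+2}^2 · c_{n-k}^2. -/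
open PowerSeries Finset

noncomputable def Us (T : ℕ → ℤ) : PowerSeries ℤ := PowerSeries.mk fun n => (T (n+2))^2
noncomputable def Vs (c : ℕ → ℤ) : PowerSeries ℤ := PowerSeries.mk fun n => (c n)^2
noncomputable def Ws (T p : ℕ → ℤ) : PowerSeries ℤ :=
  PowerSeries.mk fun l => if l < 2 then 0 else
    (4 * (T l + T (l - 1)) - (if l = 2 then 1 else 0) - 2 * p (l - 1))

lemma dU_mul (T : ℕ → ℤ) (hT0 : T 0 = 0) (hT1 : T 1 = 0) (hT2 : T 2 = 1)
    (hTrec : ∀ n, T (n + 3) = T (n + 2) + T (n + 1) + T n) :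
    ((1 : PowerSeries ℤ) - 2*X - 3*X^2 - 6*X^3 + X^4 + X^6) * Us T = 1 - X - X^2 - X^3 := by
  have hT3 : T 3 = 1 := by have h := hTrec 0; norm_num [hT2, hT1, hT0] at h; exact h
  have hT4 : T 4 = 2 := by have h := hTrec 1; norm_num [hT3, hT2, hT1] at h; exact h
  have hT5 : T 5 = 4 := by have h := hTrec 2; norm_num [hT4, hT3, hT2] at h; exact h
  have hT6 : T 6 = 7 := by have h := hTrec 3; norm_num [hT5, hT4, hT3] at h; exact h
  have hT7 : T 7 = 13 := by have h := hTrec 4; norm_num [hT6, hT5, hT4] at h; exact h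
  have hT8 : T 8 = 24 := by have h := hTrec 5; norm_num [hT7, hT6, hT5] at h; exact h
  have hT9 : T 9 = 44 := by have h := hTrec 6; norm_num [hT8, hT7, hT6] at h; exact h
  have hT10 : T 10 = 81 := by have h := hTrec 7; norm_num [hT9, hT8, hT7] at h; exact h
  have main : Us T - (Us T * X^1 + Us T * X^1) - (Us T * X^2 + Us T * X^2 + Us T * X^2)
        - (Us T * X^3 + Us T * X^3 + Us T * X^3 + Us T * X^3 + Us T * X^3 + Us T * X^3)
        + Us T * X^4 + Us T * X^6 = 1 - X - X^2 - X^3 := by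
    ext n
    rcases le_or_gt n 8 with hn | hn
    · interval_cases n <;>
        norm_num [Us, coeff_mul_X_pow', coeff_mk, coeff_one, coeff_X_pow, coeff_X,
          hT0, hT1, hT2, hT3, hT4, hT5, hT6, hT7, hT8, hT9, hT10]
    · obtain ⟨m, rfl⟩ : ∃ m, n = m + 9 := ⟨n - 9, by omega⟩
      simp only [map_add, map_sub, coeff_mul_X_pow', coeff_mk, Us, coeff_one, coeff_X_pow, coeff_X,
        show (1:ℕ) ≤ m+9 from by omega, show (2:ℕ) ≤ m+9 from by omega, show (3:ℕ) ≤ m+9 from by omega, show (4:ℕ) ≤ m+9 from by omega, show (6:ℕ) ≤ m+9 from by omega, show m+9-1 = m+8 from by omega, show m+9-2 = m+7 from by omega, show m+9-3 = m+6 from by omega, show m+9-4 = m+5 from by omega, show m+9-6 = m+3 from by omega, show m+9+2 = m+11 from by omega, show m+8+2 = m+10 from by omega, show m+7+2 = m+9 from by omega, show m+6+2 = m+8 from by omega, show m+5+2 = m+7 from by omega, show m+3+2 = m+5 from by omega, show ¬(m+9 = 0) from by omega, show ¬(m+9 = 1) from by omega, show ¬(m+9 = 2) from by omega, show ¬(m+9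 = 3) from by omega, if_true, if_false]
      have hT3 : T (m + 3) = T (m + 2) + T (m + 1) + T m := hTrec m
      have hT4' := hTrec (m + 1)
      rw [show m + 1 + 3 = m + 4 from by omega, show m + 1 + 2 = m + 3 from by omega, show m + 1 + 1 = m + 2 from by omega] at hT4'
      have hT5' := hTrec (m + 2)
      rw [show m + 2 + 3 = m + 5 from by omega, show m + 2 + 2 = m + 4 from by omega, show m + 2 + 1 = m + 3 from by omega] at hT5'
      have hT6' := hTrec (m + 3)
      rw [show m + 3 + 3 = m + 6 from by omega, show m + 3 + 2 = m + 5 from by omega, show m + 3 + 1 = m + 4 from by omega] at hT6'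
      have hT7' := hTrec (m + 4)
      rw [show m + 4 + 3 = m + 7 from by omega, show m + 4 + 2 = m + 6 from by omega, show m + 4 + 1 = m + 5 from by omega] at hT7'
      have hT8' := hTrec (m + 5)
      rw [show m + 5 + 3 = m + 8 from by omega, show m + 5 + 2 = m + 7 from by omega, show m + 5 + 1 = m + 6 from by omega] at hT8'
      have hT9' := hTrec (m + 6)
      rw [show m + 6 + 3 = m + 9 from by omega, show m + 6 + 2 = m + 8 from by omega, show m + 6 + 1 = m + 7 from by omega] at hT9'
      have hT10' := hTrec (m + 7)
      rw [show m + 7 + 3 = m + 10 from by omega, show m + 7 + 2 = m + 9 from by omega, show m + 7 + 1 = m + 8 from by omega] at hT10'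
      have hT11' := hTrec (m + 8)
      rw [show m + 8 + 3 = m + 11 from by omega, show m + 8 + 2 = m + 10 from by omega, show m + 8 + 1 = m + 9 from by omega] at hT11'
      rw [hT11', hT10', hT9', hT8', hT7', hT6', hT5', hT4', hT3]
      ring
  calc ((1 : PowerSeries ℤ) - 2*X - 3*X^2 - 6*X^3 + X^4 + X^6) * Us T
      = Us T - (Us T * X^1 + Us T * X^1) - (Us T * X^2 + Us T * X^2 + Us T * X^2)
        - (Us T * X^3 + Us T * X^3 + Us T * X^3 + Us T * X^3 + Us T * X^3 + Us T * X^3)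
        + Us T * X^4 + Us T * X^6 := by ring
    _ = 1 - X - X^2 - X^3 := main

lemma dV_mul (c : ℕ → ℤ) (hc0 : c 0 = 1) (hc1 : c 1 = 1) (hc2 : c 2 = 1)
    (hcrec : ∀ n, c (n + 3) = c (n + 2) + c n) :
    ((1 : PowerSeries ℤ) - X - X^2 - 3*X^3 - X^4 + X^5 + X^6) * Vs c = 1 - X^2 - X^3 := by
  have hc3 : c 3 = 2 := by have h := hcrec 0; norm_num [hc2, hc0] at h; exact h
  have hc4 : c 4 = 3 := by have h := hcrec 1; norm_num [hc3, hc1] at h; exact h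
  have hc5 : c 5 = 4 := by have h := hcrec 2; norm_num [hc4, hc2] at h; exact h
  have hc6 : c 6 = 6 := by have h := hcrec 3; norm_num [hc5, hc3] at h; exact h
  have hc7 : c 7 = 9 := by have h := hcrec 4; norm_num [hc6, hc4] at h; exact h
  have hc8 : c 8 = 13 := by have h := hcrec 5; norm_num [hc7, hc5] at h; exact h
  have main : Vs c - Vs c * X^1 - Vs c * X^2 - (Vs c * X^3 + Vs c * X^3 + Vs c * X^3)
        - Vs c * X^4 + Vs c * X^5 + Vs c * X^6 = 1 - X^2 - X^3 := by
    ext n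
    rcases le_or_gt n 8 with hn | hn
    · interval_cases n <;>
        norm_num [Vs, coeff_mul_X_pow', coeff_mk, coeff_one, coeff_X_pow, coeff_X,
          hc0, hc1, hc2, hc3, hc4, hc5, hc6, hc7, hc8]
    · obtain ⟨m, rfl⟩ : ∃ m, n = m + 9 := ⟨n - 9, by omega⟩
      simp only [map_add, map_sub, coeff_mul_X_pow', coeff_mk, Vs, coeff_one, coeff_X_pow, coeff_X,
        show (1:ℕ) ≤ m+9 from by omega, show (2:ℕ) ≤ m+9 from by omega, show (3:ℕ) ≤ m+9 from by omega, show (4:ℕ) ≤ m+9 from by omega, show (5:ℕ) ≤ m+9 from by omega, show (6:ℕ) ≤ m+9 from by omega, show m+9-1 = m+8 from by omega, show m+9-2 = m+7 from by omega, show m+9-3 = m+6 from by omega, show m+9-4 = m+5 from by omega, show m+9-5 = m+4 from by omega, show m+9-6 = m+3 from by omega, show ¬(m+9 = 0) from by omega, show ¬(m+9 = 2) from by omega, show ¬(m+9 = 3) from by omega, if_true, if_false]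
      have hc3 : c (m + 3) = c (m + 2) + c m := hcrec m
      have hc4' := hcrec (m + 1)
      rw [show m + 1 + 3 = m + 4 from by omega, show m + 1 + 2 = m + 3 from by omega] at hc4'
      have hc5' := hcrec (m + 2)
      rw [show m + 2 + 3 = m + 5 from by omega, show m + 2 + 2 = m + 4 from by omega] at hc5'
      have hc6' := hcrec (m + 3)
      rw [show m + 3 + 3 = m + 6 from by omega, show m + 3 + 2 = m + 5 from by omega] at hc6'
      have hc7' := hcrec (m + 4)
      rw [show m + 4 + 3 = m + 7 from by omega, show m + 4 + 2 = m + 6 from by omega] at hc7'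
      have hc8' := hcrec (m + 5)
      rw [show m + 5 + 3 = m + 8 from by omega, show m + 5 + 2 = m + 7 from by omega] at hc8'
      have hc9' := hcrec (m + 6)
      rw [show m + 6 + 3 = m + 9 from by omega, show m + 6 + 2 = m + 8 from by omega] at hc9'
      rw [hc9', hc8', hc7', hc6', hc5', hc4', hc3]
      ring
  calc ((1 : PowerSeries ℤ) - X - X^2 - 3*X^3 - X^4 + X^5 + X^6) * Vs c
      = Vs c - Vs c * X^1 - Vs c * X^2 - (Vs c * X^3 + Vs c * X^3 + Vs c * X^3)
        - Vs c * X^4 + Vs c * X^5 + Vs c * X^6 := by ring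
    _ = 1 - X^2 - X^3 := main

lemma dW_mul (T : ℕ → ℤ) (hT0 : T 0 = 0) (hT1 : T 1 = 0) (hT2 : T 2 = 1)
    (hTrec : ∀ n, T (n + 3) = T (n + 2) + T (n + 1) + T n)
    (p : ℕ → ℤ) (hp0 : p 0 = 1) (hp1 : p 1 = 0) (hp2 : p 2 = 1)
    (hprec : ∀ n, p (n + 3) = p (n + 1) + p n) :
    ((1 : PowerSeries ℤ) - X - 2*X^2 - X^3 + 2*X^4 + 2*X^5 + X^6) * Ws T p
      = 3*X^2 + 3*X^3 - 2*X^4 - 3*X^5 - 2*X^6 - X^8 := by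
  have hT3 : T 3 = 1 := by have h := hTrec 0; norm_num [hT2, hT1, hT0] at h; exact h
  have hT4 : T 4 = 2 := by have h := hTrec 1; norm_num [hT3, hT2, hT1] at h; exact h
  have hT5 : T 5 = 4 := by have h := hTrec 2; norm_num [hT4, hT3, hT2] at h; exact h
  have hT6 : T 6 = 7 := by have h := hTrec 3; norm_num [hT5, hT4, hT3] at h; exact h
  have hT7 : T 7 = 13 := by have h := hTrec 4; norm_num [hT6, hT5, hT4] at h; exact h
  have hT8 : T 8 = 24 := by have h := hTrec 5; norm_num [hT7, hT6, hT5] at h; exact h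
  have hp3 : p 3 = 1 := by have h := hprec 0; norm_num [hp1, hp0] at h; exact h
  have hp4 : p 4 = 1 := by have h := hprec 1; norm_num [hp2, hp1] at h; exact h
  have hp5 : p 5 = 2 := by have h := hprec 2; norm_num [hp3, hp2] at h; exact h
  have hp6 : p 6 = 2 := by have h := hprec 3; norm_num [hp4, hp3] at h; exact h
  have hp7 : p 7 = 3 := by have h := hprec 4; norm_num [hp5, hp4] at h; exact h
  have main : Ws T p - Ws T p * X^1 - (Ws T p * X^2 + Ws T p * X^2) - Ws T p * X^3
        + (Ws T p * X^4 + Ws T p * X^4) + (Ws T p * X^5 + Ws T p * X^5) + Ws T p * X^6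
      = (X^2 + X^2 + X^2) + (X^3 + X^3 + X^3) - (X^4 + X^4) - (X^5 + X^5 + X^5)
        - (X^6 + X^6) - X^8 := by
    ext n
    rcases le_or_gt n 8 with hn | hn
    · interval_cases n <;>
        norm_num [Ws, coeff_mul_X_pow', coeff_mk, coeff_one, coeff_X_pow, coeff_X,
          hT0, hT1, hT2, hT3, hT4, hT5, hT6, hT7, hT8,
          hp0, hp1, hp2, hp3, hp4, hp5, hp6, hp7]
    · obtain ⟨m, rfl⟩ : ∃ m, n = m + 9 := ⟨n - 9, by omega⟩
      simp only [map_add, map_sub, coeff_mul_X_pow', coeff_mk, Ws, coeff_one, coeff_X_pow, coeff_X,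
        show (1:ℕ) ≤ m+9 from by omega, show (2:ℕ) ≤ m+9 from by omega, show (3:ℕ) ≤ m+9 from by omega, show (4:ℕ) ≤ m+9 from by omega, show (5:ℕ) ≤ m+9 from by omega, show (6:ℕ) ≤ m+9 from by omega, show m+9-1 = m+8 from by omega, show m+9-2 = m+7 from by omega, show m+9-3 = m+6 from by omega, show m+9-4 = m+5 from by omega, show m+9-5 = m+4 from by omega, show m+9-6 = m+3 from by omega, show ¬(m+3 < 2) from by omega, show ¬(m+4 < 2) from by omega, show ¬(m+5 < 2) from by omega, show ¬(m+6 < 2) from by omega, show ¬(m+7 < 2) from by omega, show ¬(m+8 < 2) from by omega, show ¬(m+9 < 2) from by omega, show ¬(m+3 = 2) from by omega, show ¬(m+4 = 2) from by omega, show ¬(m+5 = 2) from by omega, show ¬(m+6 = 2) from by omega, show ¬(m+7 = 2) from by omega, show ¬(m+8 = 2) from by omega, show ¬(m+9 = 2) from by omega, show m+3-1 = m+2 from by omega, show m+4-1 = m+3 from by omega, show m+5-1 = m+4 from by omega, show m+6-1 = m+5 from by omega, show m+7-1 = m+6 from by omega, show m+8-1 = m+7 from by omega, show m+9-1 = m+8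 from by omega, show ¬(m+9 = 2) from by omega, show ¬(m+9 = 3) from by omega, show ¬(m+9 = 4) from by omega, show ¬(m+9 = 5) from by omega, show ¬(m+9 = 6) from by omega, show ¬(m+9 = 8) from by omega, if_true, if_false]
      have hT3 : T (m + 3) = T (m + 2) + T (m + 1) + T m := hTrec m
      have hT4' := hTrec (m + 1)
      rw [show m + 1 + 3 = m + 4 from by omega, show m + 1 + 2 = m + 3 from by omega, show m + 1 + 1 = m + 2 from by omega] at hT4'
      have hT5' := hTrec (m + 2)
      rw [show m + 2 + 3 = m + 5 from by omega, show m + 2 + 2 = m + 4 from by omega, show m + 2 + 1 = m + 3 from by omega] at hT5'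
      have hT6' := hTrec (m + 3)
      rw [show m + 3 + 3 = m + 6 from by omega, show m + 3 + 2 = m + 5 from by omega, show m + 3 + 1 = m + 4 from by omega] at hT6'
      have hT7' := hTrec (m + 4)
      rw [show m + 4 + 3 = m + 7 from by omega, show m + 4 + 2 = m + 6 from by omega, show m + 4 + 1 = m + 5 from by omega] at hT7'
      have hT8' := hTrec (m + 5)
      rw [show m + 5 + 3 = m + 8 from by omega, show m + 5 + 2 = m + 7 from by omega, show m + 5 + 1 = m + 6 from by omega] at hT8'
      have hT9' := hTrec (m + 6)
      rw [show m + 6 + 3 = m + 9 from by omega, show m + 6 + 2 = m + 8 from by omega, show m + 6 + 1 = m + 7 from by omega] at hT9'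
      have hp3 : p (m + 3) = p (m + 1) + p m := hprec m
      have hp4' := hprec (m + 1)
      rw [show m + 1 + 3 = m + 4 from by omega, show m + 1 + 1 = m + 2 from by omega] at hp4'
      have hp5' := hprec (m + 2)
      rw [show m + 2 + 3 = m + 5 from by omega, show m + 2 + 1 = m + 3 from by omega] at hp5'
      have hp6' := hprec (m + 3)
      rw [show m + 3 + 3 = m + 6 from by omega, show m + 3 + 1 = m + 4 from by omega] at hp6'
      have hp7' := hprec (m + 4)
      rw [show m + 4 + 3 = m + 7 from by omega, show m + 4 + 1 = m + 5 from by omega] at hp7'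
      have hp8' := hprec (m + 5)
      rw [show m + 5 + 3 = m + 8 from by omega, show m + 5 + 1 = m + 6 from by omega] at hp8'
      rw [hT9', hT8', hT7', hT6', hT5', hT4', hT3, hp8', hp7', hp6', hp5', hp4', hp3]
      ring
  calc ((1 : PowerSeries ℤ) - X - 2*X^2 - X^3 + 2*X^4 + 2*X^5 + X^6) * Ws T p
      = Ws T p - Ws T p * X^1 - (Ws T p * X^2 + Ws T p * X^2) - Ws T p * X^3
        + (Ws T p * X^4 + Ws T p * X^4) + (Ws T p * X^5 + Ws T p * X^5) + Ws T p * X^6 := by ring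
    _ = (X^2 + X^2 + X^2) + (X^3 + X^3 + X^3) - (X^4 + X^4) - (X^5 + X^5 + X^5)
        - (X^6 + X^6) - X^8 := main
    _ = 3*X^2 + 3*X^3 - 2*X^4 - 3*X^5 - 2*X^6 - X^8 := by ring

set_option maxHeartbeats 1600000 in
lemma series_eq (T : ℕ → ℤ) (hT0 : T 0 = 0) (hT1 : T 1 = 0) (hT2 : T 2 = 1)
    (hTrec : ∀ n, T (n + 3) = T (n + 2) + T (n + 1) + T n)
    (c : ℕ → ℤ) (hc0 : c 0 = 1) (hc1 : c 1 = 1) (hc2 : c 2 = 1)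
    (hcrec : ∀ n, c (n + 3) = c (n + 2) + c n)
    (p : ℕ → ℤ) (hp0 : p 0 = 1) (hp1 : p 1 = 0) (hp2 : p 2 = 1)
    (hprec : ∀ n, p (n + 3) = p (n + 1) + p n) :
    Us T = Vs c + Ws T p * Us T * Vs c := by
  have hU := dU_mul T hT0 hT1 hT2 hTrec
  have hV := dV_mul c hc0 hc1 hc2 hcrec
  have hW := dW_mul T hT0 hT1 hT2 hTrec p hp0 hp1 hp2 hprec
  have hne : (((1 : PowerSeries ℤ) - 2*X - 3*X^2 - 6*X^3 + X^4 + X^6) *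
      ((1 : PowerSeries ℤ) - X - X^2 - 3*X^3 - X^4 + X^5 + X^6) *
      ((1 : PowerSeries ℤ) - X - 2*X^2 - X^3 + 2*X^4 + 2*X^5 + X^6)) ≠ 0 := by
    intro hz
    have h0 := congrArg (PowerSeries.constantCoeff (R := ℤ)) hz
    simp [map_mul, map_sub, map_add, map_pow, map_one, constantCoeff_X] at h0
  have key : (((1 : PowerSeries ℤ) - 2*X - 3*X^2 - 6*X^3 + X^4 + X^6) *
      ((1 : PowerSeries ℤ) - X - X^2 - 3*X^3 - X^4 + X^5 + X^6) *
      ((1 : PowerSeries ℤ) - X - 2*X^2 - X^3 + 2*X^4 + 2*X^5 + X^6)) *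
      (Us T - (Vs c + Ws T p * Us T * Vs c)) = 0 := by
    have e1 : (((1 : PowerSeries ℤ) - 2*X - 3*X^2 - 6*X^3 + X^4 + X^6) *
        ((1 : PowerSeries ℤ) - X - X^2 - 3*X^3 - X^4 + X^5 + X^6) *
        ((1 : PowerSeries ℤ) - X - 2*X^2 - X^3 + 2*X^4 + 2*X^5 + X^6)) *
        (Us T - (Vs c + Ws T p * Us T * Vs c)) =
        (((1 : PowerSeries ℤ) - 2*X - 3*X^2 - 6*X^3 + X^4 + X^6) * Us T) *
          (((1 : PowerSeries ℤ) - X - X^2 - 3*X^3 - X^4 + X^5 + X^6) *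
           ((1 : PowerSeries ℤ) - X - 2*X^2 - X^3 + 2*X^4 + 2*X^5 + X^6))
        - (((1 : PowerSeries ℤ) - X - X^2 - 3*X^3 - X^4 + X^5 + X^6) * Vs c) *
          (((1 : PowerSeries ℤ) - 2*X - 3*X^2 - 6*X^3 + X^4 + X^6) *
           ((1 : PowerSeries ℤ) - X - 2*X^2 - X^3 + 2*X^4 + 2*X^5 + X^6))
        - (((1 : PowerSeries ℤ) - X - 2*X^2 - X^3 + 2*X^4 + 2*X^5 + X^6) * Ws T p) *
          ((((1 : PowerSeries ℤ) - 2*X - 3*X^2 - 6*X^3 + X^4 + X^6) * Us T) *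
           (((1 : PowerSeries ℤ) - X - X^2 - 3*X^3 - X^4 + X^5 + X^6) * Vs c)) := by
      ring
    rw [e1, hU, hV, hW]
    ring
  rcases mul_eq_zero.mp key with h | h
  · exact absurd h hne
  · rwa [sub_eq_zero] at h

lemma coeff_WUV (T c p : ℕ → ℤ) (n : ℕ) :
    PowerSeries.coeff (R := ℤ) n (Ws T p * Us T * Vs c) =
      ∑ k ∈ Finset.Icc 2 n, ∑ l ∈ Finset.Icc 2 k,
        (4 * (T l + T (l - 1)) - (if l = 2 then 1 else 0) - 2 * p (l - 1))
          * (T (k - l + 2))^2 * (c (n - k))^2 := by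
  have hIcc : ∀ m : ℕ, Finset.Icc 2 m = Finset.filter (fun x => 2 ≤ x) (Finset.range (m+1)) := by
    intro m
    ext x
    simp only [Finset.mem_Icc, Finset.mem_filter, Finset.mem_range, Nat.lt_succ_iff]
    omega
  rw [coeff_mul, Finset.Nat.sum_antidiagonal_eq_sum_range_succ_mk]
  simp only [coeff_mul, Finset.Nat.sum_antidiagonal_eq_sum_range_succ_mk, coeff_mk, Us, Vs, Ws]
  simp only [hIcc, Finset.sum_filter]
  apply Finset.sum_congr rfl
  intro k _
  by_cases h2k : 2 ≤ k
  · rw [if_pos h2k, Finset.sum_mul]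
    apply Finset.sum_congr rfl
    intro l _
    by_cases h2l : 2 ≤ l
    · rw [if_pos h2l, if_neg (show ¬ l < 2 by omega)]
    · rw [if_neg h2l, if_pos (show l < 2 by omega)]
      ring
  · rw [if_neg h2k]
    have hk01 : k = 0 ∨ k = 1 := by omega
    rcases hk01 with rfl | rfl <;> simp [Finset.sum_range_succ]

/-- Identity 8 of the paper, with Narayana's cows and Padovan numbers. -/
theorem stmt_11 (T : ℕ → ℤ) (hT0 : T 0 = 0) (hT1 : T 1 = 0) (hT2 : T 2 = 1)
    (hTrec : ∀ n, T (n + 3) = T (n + 2) + T (n + 1) + T n)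
    (c : ℕ → ℤ) (hc0 : c 0 = 1) (hc1 : c 1 = 1) (hc2 : c 2 = 1)
    (hcrec : ∀ n, c (n + 3) = c (n + 2) + c n)
    (p : ℕ → ℤ) (hp0 : p 0 = 1) (hp1 : p 1 = 0) (hp2 : p 2 = 1)
    (hprec : ∀ n, p (n + 3) = p (n + 1) + p n) :
    ∀ n : ℕ, (T (n + 2))^2 = (c n)^2 + ∑ k ∈ Finset.Icc 2 n, ∑ l ∈ Finset.Icc 2 k,
      (4 * (T l + T (l - 1)) - (if l = 2 then 1 else 0) - 2 * p (l - 1))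
        * (T (k - l + 2))^2 * (c (n - k))^2 := by
  intro n
  have hs := series_eq T hT0 hT1 hT2 hTrec c hc0 hc1 hc2 hcrec p hp0 hp1 hp2 hprec
  have h := congrArg (PowerSeries.coeff (R := ℤ) n) hs
  rw [map_add, coeff_WUV T c p n,
    show (PowerSeries.coeff (R := ℤ) n) (Us T) = (T (n+2))^2 from by simp [Us],
    show (PowerSeries.coeff (R := ℤ) n) (Vs c) = (c n)^2 from by simp [Vs]] at h
  exact h
end

section
/- Let T be the tribonacci sequence (T_0 = T_1 = 0, T_2 = 1, T_n = T_{n-1} + T_{n-2} + T_{n-3}). Let c be the Narayana's cows sequence (c_0 = 1, c_n = c_{n-1} + c_{n-3} for n ≥ 1, c of negative index 0) and p the Padovan sequence (p_0 = 1, p_n = p_{n-2} + p_{n-3} for n ≥ 1, p of negative index 0). Then for all n ≥ 0, T_{n+2}^2 = p_n^2 + ∑_{k=1}^{n} ∑_{l=1}^{k} [4(T_l + T_{l-1}) + δ_{l,1} − 2δ_{l,2} − 2c_{l-5}] · T_{k-l+2}^2 · p_{n-k}^2. -/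
def Tv : ℕ → ℤ
  | 0 => 0 | 1 => 0 | 2 => 1
  | n+3 => Tv (n+2) + Tv (n+1) + Tv n

def cv : ℕ → ℤ
  | 0 => 1 | 1 => 1 | 2 => 1
  | n+3 => cv (n+2) + cv n

def pv : ℕ → ℤ
  | 0 => 1 | 1 => 0 | 2 => 1
  | n+3 => pv (n+1) + pv n

def Ev : ℕ → ℤ
  | 0 => 0 | 1 => 0 | 2 => 1
  | n+3 => Ev (n+2) + Ev n

def Av (l : ℕ) : ℤ :=
  4*(Tv l + Tv (l-1)) + (if l = 1 then 1 else 0) - 2*(if l = 2 then 1 else 0) - 2*Ev (l-3)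

example : Tv 5 = 4 := by decide
example : Av 5 = 22 := by decide
example : Tv 20 = 35890 := by decide

lemma hTv3 : ∀ m, Tv (m+3) = Tv (m+2) + Tv (m+1) + Tv m := fun m => rfl
lemma hpv3 : ∀ m, pv (m+3) = pv (m+1) + pv m := fun m => rfl
lemma hEv3 : ∀ m, Ev (m+3) = Ev (m+2) + Ev m := fun m => rfl

-- U recurrence (qU = [-1,0,-1,6,3,2])
lemma hU6 : ∀ n, Tv (n+8)^2 = 2*Tv (n+7)^2 + 3*Tv (n+6)^2 + 6*Tv (n+5)^2
    - Tv (n+4)^2 - Tv (n+2)^2 := by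
  intro n
  simp only [hTv3]
  ring

-- P recurrence (qP = [-1,1,-1,1,1,1])
lemma hP6 : ∀ n, pv (n+6)^2 = pv (n+5)^2 + pv (n+4)^2 + pv (n+3)^2 - pv (n+2)^2
    + pv (n+1)^2 - pv n^2 := by
  intro n
  simp only [hpv3]
  ring

lemma hAv3 : ∀ m, Av (m+3) = 4*(Tv (m+3) + Tv (m+2)) - 2*Ev m := by
  intro m
  unfold Av
  have h1 : m + 3 ≠ 1 := by omega
  have h2 : m + 3 ≠ 2 := by omega
  have h3 : m + 3 - 1 = m + 2 := by omega
  have h4 : m + 3 - 3 = m := by omega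
  rw [h3, h4, if_neg h1, if_neg h2]
  ring

-- A recurrence (qa = [-1,-1,-2,1,0,2]) valid from base l = m+3
lemma hA6 : ∀ m, Av (m+9) = 2*Av (m+8) + Av (m+6) - 2*Av (m+5) - Av (m+4) - Av (m+3) := by
  intro m
  simp only [hAv3]
  simp only [hTv3, hEv3]
  ring

-- swap lemma
lemma swap_tri (N : ℕ) (F : ℕ → ℕ → ℤ) :
    ∑ i ∈ Finset.range N, ∑ j ∈ Finset.Icc 1 i, F i j
      = ∑ j ∈ Finset.Icc 1 N, ∑ i ∈ Finset.Icc j (N-1), F i j := by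
  have h1 : ∀ i ∈ Finset.range N, ∑ j ∈ Finset.Icc 1 i, F i j
      = ∑ j ∈ Finset.Icc 1 N, if j ≤ i then F i j else 0 := by
    intro i hi
    rw [Finset.sum_ite, Finset.sum_const_zero, add_zero]
    apply Finset.sum_congr _ (fun x _ => rfl)
    ext j
    simp only [Finset.mem_filter, Finset.mem_Icc, Finset.mem_range] at *
    omega
  rw [Finset.sum_congr rfl h1, Finset.sum_comm]
  apply Finset.sum_congr rfl
  intro j hj
  rw [Finset.sum_ite, Finset.sum_const_zero, add_zero]
  apply Finset.sum_congr _ (fun x _ => rfl)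
  ext i
  simp only [Finset.mem_filter, Finset.mem_range, Finset.mem_Icc] at *
  omega

lemma split_conv (f g : ℕ → ℤ) (n i : ℕ) :
    ∑ k ∈ Finset.range (n + i + 1), f k * g (n + i - k)
      = (∑ k ∈ Finset.range (n+1), f k * g (n + i - k))
        + ∑ j ∈ Finset.Icc 1 i, f (n+j) * g (i - j) := by
  have h1 : n + 1 ≤ n + i + 1 := by omega
  rw [Finset.range_eq_Ico, ← Finset.sum_Ico_consecutive _ (Nat.zero_le _) h1,
    ← Finset.range_eq_Ico]
  congr 1
  apply Finset.sum_nbij' (fun k => k - n) (fun j => n + j)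
  · intro a ha
    simp only [Finset.mem_Ico, Finset.mem_Icc] at *
    omega
  · intro a ha
    simp only [Finset.mem_Ico, Finset.mem_Icc] at *
    omega
  · intro a ha
    simp only [Finset.mem_Ico] at ha
    omega
  · intro a ha
    omega
  · intro a ha
    simp only [Finset.mem_Ico] at ha
    have e1 : n + (a - n) = a := by omega
    have e2 : i - (a - n) = n + i - a := by omega
    rw [e1, e2]

lemma conv_rec (f g q : ℕ → ℤ) (N : ℕ)
    (hg : ∀ n, g (n + N) = ∑ i ∈ Finset.range N, q i * g (n + i)) (n : ℕ) :
    ∑ k ∈ Finset.range (n + N + 1), f k * g (n + N - k)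
      = (∑ i ∈ Finset.range N, q i * ∑ k ∈ Finset.range (n + i + 1), f k * g (n + i - k))
        + ∑ j ∈ Finset.Icc 1 N, f (n + j) *
            (g (N - j) - ∑ i ∈ Finset.Icc j (N - 1), q i * g (i - j)) := by
  rw [split_conv f g n N]
  have hfirst : ∑ k ∈ Finset.range (n+1), f k * g (n + N - k)
      = ∑ i ∈ Finset.range N, q i * ∑ k ∈ Finset.range (n+1), f k * g (n + i - k) := by
    calc ∑ k ∈ Finset.range (n+1), f k * g (n + N - k)
        = ∑ k ∈ Finset.range (n+1), ∑ i ∈ Finset.range N, q i * (f k * g (n + i - k)) := by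
          apply Finset.sum_congr rfl
          intro k hk
          have hk' : k ≤ n := by simpa [Nat.lt_succ_iff] using hk
          have h : n + N - k = (n - k) + N := by omega
          rw [h, hg (n-k), Finset.mul_sum]
          apply Finset.sum_congr rfl
          intro i _
          have h2 : n - k + i = n + i - k := by omega
          rw [h2]; ring
      _ = ∑ i ∈ Finset.range N, q i * ∑ k ∈ Finset.range (n+1), f k * g (n + i - k) := by
          rw [Finset.sum_comm]
          simp [Finset.mul_sum]
  rw [hfirst]
  have hsplit : ∀ i ∈ Finset.range N,
      q i * ∑ k ∈ Finset.range (n+1), f k * g (n + i - k)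
        = q i * ∑ k ∈ Finset.range (n + i + 1), f k * g (n + i - k)
          - ∑ j ∈ Finset.Icc 1 i, q i * (f (n+j) * g (i - j)) := by
    intro i _
    rw [split_conv f g n i, mul_add]
    rw [Finset.mul_sum (s := Finset.Icc 1 i)]
    ring
  rw [Finset.sum_congr rfl hsplit, Finset.sum_sub_distrib, swap_tri]
  have last : ∀ j ∈ Finset.Icc 1 N,
      f (n+j) * (g (N-j) - ∑ i ∈ Finset.Icc j (N-1), q i * g (i-j))
        = f (n+j) * g (N-j) - ∑ i ∈ Finset.Icc j (N-1), q i * (f (n+j) * g (i-j)) := by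
    intro j _
    rw [mul_sub, Finset.mul_sum]
    congr 1
    exact Finset.sum_congr rfl fun i _ => by ring
  rw [Finset.sum_congr rfl last, Finset.sum_sub_distrib]
  ring

def qUf : ℕ → ℤ
  | 0 => -1 | 2 => -1 | 3 => 6 | 4 => 3 | 5 => 2 | _ => 0
def qPf : ℕ → ℤ
  | 0 => -1 | 1 => 1 | 2 => -1 | 3 => 1 | 4 => 1 | 5 => 1 | _ => 0
def RUf : ℕ → ℤ
  | 3 => -1 | 4 => -1 | 5 => -1 | 6 => 1 | _ => 0
def RPf : ℕ → ℤ
  | 3 => -1 | 5 => -1 | 6 => 1 | _ => 0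

def Cv (k : ℕ) : ℤ := ∑ l ∈ Finset.range (k+1), Av l * Tv (k - l + 2)^2
def Bv (k : ℕ) : ℤ := (if k = 0 then (1:ℤ) else 0) + Cv k
def RHSv (n : ℕ) : ℤ := ∑ k ∈ Finset.range (n+1), Bv k * pv (n - k)^2

lemma hBC : ∀ m, Bv (m+1) = Cv (m+1) := by intro m; simp [Bv]

lemma hCv6 : ∀ n, Cv (n+6) = 2*Cv (n+5) + 3*Cv (n+4) + 6*Cv (n+3) - Cv (n+2) - Cv n
    + Av (n+6) - Av (n+5) - Av (n+4) - Av (n+3) := by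
  intro n
  have hg : ∀ m : ℕ, Tv (m+6+2)^2 = ∑ i ∈ Finset.range 6, qUf i * Tv (m+i+2)^2 := by
    intro m
    simp only [Finset.sum_range_succ, Finset.sum_range_zero]
    show Tv (m+8)^2 = 0 + (-1) * Tv (m+2)^2 + 0 * Tv (m+1+2)^2 + (-1) * Tv (m+2+2)^2
      + 6 * Tv (m+3+2)^2 + 3 * Tv (m+4+2)^2 + 2 * Tv (m+5+2)^2
    linear_combination hU6 m
  have H : Cv (n+6) = (∑ i ∈ Finset.range 6, qUf i * Cv (n+i))
      + ∑ j ∈ Finset.Icc 1 6, Av (n+j) *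
          (Tv (6-j+2)^2 - ∑ i ∈ Finset.Icc j (6-1), qUf i * Tv (i-j+2)^2) :=
    conv_rec Av (fun m => Tv (m+2)^2) qUf 6 hg n
  have hb : ∀ j ∈ Finset.Icc 1 6, Av (n+j) *
      (Tv (6-j+2)^2 - ∑ i ∈ Finset.Icc j (6-1), qUf i * Tv (i-j+2)^2)
        = Av (n+j) * RUf j := by
    intro j hj
    simp only [Finset.mem_Icc] at hj
    obtain ⟨h1, h2⟩ := hj
    congr 1
    interval_cases j <;> decide
  rw [Finset.sum_congr rfl hb] at H
  rw [show (Finset.Icc 1 6 : Finset ℕ) = {1,2,3,4,5,6} from rfl] at H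
  simp only [Finset.sum_range_succ, Finset.sum_range_zero, Finset.sum_insert,
    Finset.mem_insert, Finset.mem_singleton, Finset.sum_singleton] at H
  norm_num [qUf, RUf] at H
  linarith [H]

lemma hRHS6 : ∀ n, RHSv (n+6) = RHSv (n+5) + RHSv (n+4) + RHSv (n+3) - RHSv (n+2)
    + RHSv (n+1) - RHSv n - Cv (n+3) - Cv (n+5) + Cv (n+6) := by
  intro n
  have hg : ∀ m : ℕ, pv (m+6)^2 = ∑ i ∈ Finset.range 6, qPf i * pv (m+i)^2 := by
    intro m
    simp only [Finset.sum_range_succ, Finset.sum_range_zero]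
    show pv (m+6)^2 = 0 + (-1) * pv m ^2 + 1 * pv (m+1)^2 + (-1) * pv (m+2)^2
      + 1 * pv (m+3)^2 + 1 * pv (m+4)^2 + 1 * pv (m+5)^2
    linear_combination hP6 m
  have H : RHSv (n+6) = (∑ i ∈ Finset.range 6, qPf i * RHSv (n+i))
      + ∑ j ∈ Finset.Icc 1 6, Bv (n+j) *
          (pv (6-j)^2 - ∑ i ∈ Finset.Icc j (6-1), qPf i * pv (i-j)^2) :=
    conv_rec Bv (fun m => pv m ^2) qPf 6 hg n
  have hb : ∀ j ∈ Finset.Icc 1 6, Bv (n+j) *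
      (pv (6-j)^2 - ∑ i ∈ Finset.Icc j (6-1), qPf i * pv (i-j)^2)
        = Cv (n+j) * RPf j := by
    intro j hj
    simp only [Finset.mem_Icc] at hj
    obtain ⟨h1, h2⟩ := hj
    have hB : Bv (n+j) = Cv (n+j) := by
      obtain ⟨m, hm⟩ : ∃ m, n + j = m + 1 := ⟨n + j - 1, by omega⟩
      rw [hm, hBC]
    rw [hB]
    congr 1
    interval_cases j <;> decide
  rw [Finset.sum_congr rfl hb] at H
  rw [show (Finset.Icc 1 6 : Finset ℕ) = {1,2,3,4,5,6} from rfl] at H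
  simp only [Finset.sum_range_succ, Finset.sum_range_zero, Finset.sum_insert,
    Finset.mem_insert, Finset.mem_singleton, Finset.sum_singleton] at H
  norm_num [qPf, RPf] at H
  linarith [H]

lemma hCv12 : ∀ n, Cv (n+14) = 4*Cv (n+13) - Cv (n+12) + Cv (n+11) - 17*Cv (n+10)
    + 2*Cv (n+9) + 20*Cv (n+7) + 7*Cv (n+6) + 6*Cv (n+5) - 3*Cv (n+4) - Cv (n+3)
    - Cv (n+2) := by
  intro n
  have e2 : Cv (n+8) = 2*Cv (n+7) + 3*Cv (n+6) + 6*Cv (n+5) - Cv (n+4) - Cv (n+2)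
    + Av (n+8) - Av (n+7) - Av (n+6) - Av (n+5) := hCv6 (n+2)
  have e3 : Cv (n+9) = 2*Cv (n+8) + 3*Cv (n+7) + 6*Cv (n+6) - Cv (n+5) - Cv (n+3)
    + Av (n+9) - Av (n+8) - Av (n+7) - Av (n+6) := hCv6 (n+3)
  have e4 : Cv (n+10) = 2*Cv (n+9) + 3*Cv (n+8) + 6*Cv (n+7) - Cv (n+6) - Cv (n+4)
    + Av (n+10) - Av (n+9) - Av (n+8) - Av (n+7) := hCv6 (n+4)
  have e5 : Cv (n+11) = 2*Cv (n+10) + 3*Cv (n+9) + 6*Cv (n+8) - Cv (n+7) - Cv (n+5)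
    + Av (n+11) - Av (n+10) - Av (n+9) - Av (n+8) := hCv6 (n+5)
  have e6 : Cv (n+12) = 2*Cv (n+11) + 3*Cv (n+10) + 6*Cv (n+9) - Cv (n+8) - Cv (n+6)
    + Av (n+12) - Av (n+11) - Av (n+10) - Av (n+9) := hCv6 (n+6)
  have e7 : Cv (n+13) = 2*Cv (n+12) + 3*Cv (n+11) + 6*Cv (n+10) - Cv (n+9) - Cv (n+7)
    + Av (n+13) - Av (n+12) - Av (n+11) - Av (n+10) := hCv6 (n+7)
  have e8 : Cv (n+14) = 2*Cv (n+13) + 3*Cv (n+12) + 6*Cv (n+11) - Cv (n+10) - Cv (n+8)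
    + Av (n+14) - Av (n+13) - Av (n+12) - Av (n+11) := hCv6 (n+8)
  have a2 : Av (n+11) = 2*Av (n+10) + Av (n+8) - 2*Av (n+7) - Av (n+6) - Av (n+5) := hA6 (n+2)
  have a3 : Av (n+12) = 2*Av (n+11) + Av (n+9) - 2*Av (n+8) - Av (n+7) - Av (n+6) := hA6 (n+3)
  have a4 : Av (n+13) = 2*Av (n+12) + Av (n+10) - 2*Av (n+9) - Av (n+8) - Av (n+7) := hA6 (n+4)
  have a5 : Av (n+14) = 2*Av (n+13) + Av (n+11) - 2*Av (n+10) - Av (n+9) - Av (n+8) := hA6 (n+5)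
  linear_combination e2 + e3 + 2*e4 - e5 - 2*e7 + e8 + a5 - a4 - a3 - a2

lemma hRHS18 : ∀ n, RHSv (n+19) = 5*RHSv (n+18) - 4*RHSv (n+17) - RHSv (n+16)
    - 22*RHSv (n+15) + 24*RHSv (n+14) + 8*RHSv (n+13) + 41*RHSv (n+12)
    - 34*RHSv (n+11) - RHSv (n+10) - 55*RHSv (n+9) + 11*RHSv (n+8) - 16*RHSv (n+7)
    + 24*RHSv (n+6) + 9*RHSv (n+4) - 3*RHSv (n+3) - RHSv (n+1) := by
  intro n
  have r1 : RHSv (n+7) = RHSv (n+6) + RHSv (n+5) + RHSv (n+4) - RHSv (n+3)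
      + RHSv (n+2) - RHSv (n+1) - Cv (n+4) - Cv (n+6) + Cv (n+7) := hRHS6 (n+1)
  have r2 : RHSv (n+8) = RHSv (n+7) + RHSv (n+6) + RHSv (n+5) - RHSv (n+4)
      + RHSv (n+3) - RHSv (n+2) - Cv (n+5) - Cv (n+7) + Cv (n+8) := hRHS6 (n+2)
  have r3 : RHSv (n+9) = RHSv (n+8) + RHSv (n+7) + RHSv (n+6) - RHSv (n+5)
      + RHSv (n+4) - RHSv (n+3) - Cv (n+6) - Cv (n+8) + Cv (n+9) := hRHS6 (n+3)
  have r4 : RHSv (n+10) = RHSv (n+9) + RHSv (n+8) + RHSv (n+7) - RHSv (n+6)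
      + RHSv (n+5) - RHSv (n+4) - Cv (n+7) - Cv (n+9) + Cv (n+10) := hRHS6 (n+4)
  have r5 : RHSv (n+11) = RHSv (n+10) + RHSv (n+9) + RHSv (n+8) - RHSv (n+7)
      + RHSv (n+6) - RHSv (n+5) - Cv (n+8) - Cv (n+10) + Cv (n+11) := hRHS6 (n+5)
  have r6 : RHSv (n+12) = RHSv (n+11) + RHSv (n+10) + RHSv (n+9) - RHSv (n+8)
      + RHSv (n+7) - RHSv (n+6) - Cv (n+9) - Cv (n+11) + Cv (n+12) := hRHS6 (n+6)
  have r7 : RHSv (n+13) = RHSv (n+12) + RHSv (n+11) + RHSv (n+10) - RHSv (n+9)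
      + RHSv (n+8) - RHSv (n+7) - Cv (n+10) - Cv (n+12) + Cv (n+13) := hRHS6 (n+7)
  have r8 : RHSv (n+14) = RHSv (n+13) + RHSv (n+12) + RHSv (n+11) - RHSv (n+10)
      + RHSv (n+9) - RHSv (n+8) - Cv (n+11) - Cv (n+13) + Cv (n+14) := hRHS6 (n+8)
  have r9 : RHSv (n+15) = RHSv (n+14) + RHSv (n+13) + RHSv (n+12) - RHSv (n+11)
      + RHSv (n+10) - RHSv (n+9) - Cv (n+12) - Cv (n+14) + Cv (n+15) := hRHS6 (n+9)
  have r10 : RHSv (n+16) = RHSv (n+15) + RHSv (n+14) + RHSv (n+13) - RHSv (n+12)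
      + RHSv (n+11) - RHSv (n+10) - Cv (n+13) - Cv (n+15) + Cv (n+16) := hRHS6 (n+10)
  have r11 : RHSv (n+17) = RHSv (n+16) + RHSv (n+15) + RHSv (n+14) - RHSv (n+13)
      + RHSv (n+12) - RHSv (n+11) - Cv (n+14) - Cv (n+16) + Cv (n+17) := hRHS6 (n+11)
  have r12 : RHSv (n+18) = RHSv (n+17) + RHSv (n+16) + RHSv (n+15) - RHSv (n+14)
      + RHSv (n+13) - RHSv (n+12) - Cv (n+15) - Cv (n+17) + Cv (n+18) := hRHS6 (n+12)
  have r13 : RHSv (n+19) = RHSv (n+18) + RHSv (n+17) + RHSv (n+16) - RHSv (n+15)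
      + RHSv (n+14) - RHSv (n+13) - Cv (n+16) - Cv (n+18) + Cv (n+19) := hRHS6 (n+13)
  have c2 : Cv (n+16) = 4*Cv (n+15) - Cv (n+14) + Cv (n+13) - 17*Cv (n+12)
      + 2*Cv (n+11) + 20*Cv (n+9) + 7*Cv (n+8) + 6*Cv (n+7) - 3*Cv (n+6) - Cv (n+5)
      - Cv (n+4) := hCv12 (n+2)
  have c4 : Cv (n+18) = 4*Cv (n+17) - Cv (n+16) + Cv (n+15) - 17*Cv (n+14)
      + 2*Cv (n+13) + 20*Cv (n+11) + 7*Cv (n+10) + 6*Cv (n+9) - 3*Cv (n+8) - Cv (n+7)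
      - Cv (n+6) := hCv12 (n+4)
  have c5 : Cv (n+19) = 4*Cv (n+18) - Cv (n+17) + Cv (n+16) - 17*Cv (n+15)
      + 2*Cv (n+14) + 20*Cv (n+12) + 7*Cv (n+11) + 6*Cv (n+10) - 3*Cv (n+9) - Cv (n+8)
      - Cv (n+7) := hCv12 (n+5)
  linear_combination r1 + r2 + 3*r3 - 6*r4 - 7*r5 - 20*r6 - 2*r8 + 17*r9 - r10 + r11 - 4*r12 + r13 + c5 - c4 - c2

lemma hU18 : ∀ n, Tv (n+21)^2 = 5*Tv (n+20)^2 - 4*Tv (n+19)^2 - Tv (n+18)^2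
    - 22*Tv (n+17)^2 + 24*Tv (n+16)^2 + 8*Tv (n+15)^2 + 41*Tv (n+14)^2
    - 34*Tv (n+13)^2 - Tv (n+12)^2 - 55*Tv (n+11)^2 + 11*Tv (n+10)^2 - 16*Tv (n+9)^2
    + 24*Tv (n+8)^2 + 9*Tv (n+6)^2 - 3*Tv (n+5)^2 - Tv (n+3)^2 := by
  intro n
  have u1 : Tv (n+9)^2 = 2*Tv (n+8)^2 + 3*Tv (n+7)^2 + 6*Tv (n+6)^2
      - Tv (n+5)^2 - Tv (n+3)^2 := hU6 (n+1)
  have u2 : Tv (n+10)^2 = 2*Tv (n+9)^2 + 3*Tv (n+8)^2 + 6*Tv (n+7)^2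
      - Tv (n+6)^2 - Tv (n+4)^2 := hU6 (n+2)
  have u3 : Tv (n+11)^2 = 2*Tv (n+10)^2 + 3*Tv (n+9)^2 + 6*Tv (n+8)^2
      - Tv (n+7)^2 - Tv (n+5)^2 := hU6 (n+3)
  have u4 : Tv (n+12)^2 = 2*Tv (n+11)^2 + 3*Tv (n+10)^2 + 6*Tv (n+9)^2
      - Tv (n+8)^2 - Tv (n+6)^2 := hU6 (n+4)
  have u5 : Tv (n+13)^2 = 2*Tv (n+12)^2 + 3*Tv (n+11)^2 + 6*Tv (n+10)^2
      - Tv (n+9)^2 - Tv (n+7)^2 := hU6 (n+5)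
  have u6 : Tv (n+14)^2 = 2*Tv (n+13)^2 + 3*Tv (n+12)^2 + 6*Tv (n+11)^2
      - Tv (n+10)^2 - Tv (n+8)^2 := hU6 (n+6)
  have u7 : Tv (n+15)^2 = 2*Tv (n+14)^2 + 3*Tv (n+13)^2 + 6*Tv (n+12)^2
      - Tv (n+11)^2 - Tv (n+9)^2 := hU6 (n+7)
  have u8 : Tv (n+16)^2 = 2*Tv (n+15)^2 + 3*Tv (n+14)^2 + 6*Tv (n+13)^2
      - Tv (n+12)^2 - Tv (n+10)^2 := hU6 (n+8)
  have u9 : Tv (n+17)^2 = 2*Tv (n+16)^2 + 3*Tv (n+15)^2 + 6*Tv (n+14)^2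
      - Tv (n+13)^2 - Tv (n+11)^2 := hU6 (n+9)
  have u10 : Tv (n+18)^2 = 2*Tv (n+17)^2 + 3*Tv (n+16)^2 + 6*Tv (n+15)^2
      - Tv (n+14)^2 - Tv (n+12)^2 := hU6 (n+10)
  have u11 : Tv (n+19)^2 = 2*Tv (n+18)^2 + 3*Tv (n+17)^2 + 6*Tv (n+16)^2
      - Tv (n+15)^2 - Tv (n+13)^2 := hU6 (n+11)
  have u12 : Tv (n+20)^2 = 2*Tv (n+19)^2 + 3*Tv (n+18)^2 + 6*Tv (n+17)^2
      - Tv (n+16)^2 - Tv (n+14)^2 := hU6 (n+12)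
  have u13 : Tv (n+21)^2 = 2*Tv (n+20)^2 + 3*Tv (n+19)^2 + 6*Tv (n+18)^2
      - Tv (n+17)^2 - Tv (n+15)^2 := hU6 (n+13)
  linear_combination u1 + 2*u3 - 3*u4 + u5 - 7*u6 + 2*u7 - 3*u8 + 6*u9 + u11 - 3*u12 + u13

lemma key_s12 : ∀ n, Tv (n+2)^2 = RHSv n := by
  intro n
  induction n using Nat.strong_induction_on with
  | _ n ih =>
    by_cases h : n < 19
    · interval_cases n <;> decide
    · obtain ⟨m, rfl⟩ : ∃ m, n = m + 19 := ⟨n - 19, by omega⟩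
      have i1 : Tv (m+3)^2 = RHSv (m+1) := ih (m+1) (by omega)
      have i3 : Tv (m+5)^2 = RHSv (m+3) := ih (m+3) (by omega)
      have i4 : Tv (m+6)^2 = RHSv (m+4) := ih (m+4) (by omega)
      have i6 : Tv (m+8)^2 = RHSv (m+6) := ih (m+6) (by omega)
      have i7 : Tv (m+9)^2 = RHSv (m+7) := ih (m+7) (by omega)
      have i8 : Tv (m+10)^2 = RHSv (m+8) := ih (m+8) (by omega)
      have i9 : Tv (m+11)^2 = RHSv (m+9) := ih (m+9) (by omega)
      have i10 : Tv (m+12)^2 = RHSv (m+10) := ih (m+10) (by omega)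
      have i11 : Tv (m+13)^2 = RHSv (m+11) := ih (m+11) (by omega)
      have i12 : Tv (m+14)^2 = RHSv (m+12) := ih (m+12) (by omega)
      have i13 : Tv (m+15)^2 = RHSv (m+13) := ih (m+13) (by omega)
      have i14 : Tv (m+16)^2 = RHSv (m+14) := ih (m+14) (by omega)
      have i15 : Tv (m+17)^2 = RHSv (m+15) := ih (m+15) (by omega)
      have i16 : Tv (m+18)^2 = RHSv (m+16) := ih (m+16) (by omega)
      have i17 : Tv (m+19)^2 = RHSv (m+17) := ih (m+17) (by omega)
      have i18 : Tv (m+20)^2 = RHSv (m+18) := ih (m+18) (by omega)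
      show Tv (m+21)^2 = RHSv (m+19)
      linear_combination hU18 m - hRHS18 m - i1 - 3*i3 + 9*i4 + 24*i6 - 16*i7 + 11*i8 - 55*i9 - i10 - 34*i11 + 41*i12 + 8*i13 + 24*i14 - 22*i15 - i16 - 4*i17 + 5*i18

lemma hEcv : ∀ m, cv m = Ev (m+2) := by
  intro m
  induction m using Nat.strong_induction_on with
  | _ m ih =>
    match m with
    | 0 => rfl
    | 1 => rfl
    | 2 => rfl
    | (k+3) =>
      show cv (k+2) + cv k = Ev (k+5)
      rw [ih (k+2) (by omega), ih k (by omega)]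
      exact (hEv3 (k+2)).symm

lemma hCvIcc : ∀ k, Cv k = ∑ l ∈ Finset.Icc 1 k, Av l * Tv (k-l+2)^2 := by
  intro k
  unfold Cv
  have h : Finset.range (k+1) = insert 0 (Finset.Icc 1 k) := by
    ext x
    simp [Nat.lt_succ_iff]
    omega
  rw [h, Finset.sum_insert (by simp)]
  simp [show Av 0 = 0 from by decide]

lemma hRHSexpand (n : ℕ) : RHSv n = pv n^2 + ∑ k ∈ Finset.Icc 1 n,
    ∑ l ∈ Finset.Icc 1 k, Av l * Tv (k-l+2)^2 * pv (n-k)^2 := by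
  have h1 : ∀ k, ∑ l ∈ Finset.Icc 1 k, Av l * Tv (k-l+2)^2 * pv (n-k)^2
      = Cv k * pv (n-k)^2 := by
    intro k
    rw [hCvIcc k, Finset.sum_mul]
  rw [Finset.sum_congr rfl (fun k _ => h1 k)]
  unfold RHSv
  have h2 : Finset.range (n+1) = insert 0 (Finset.Icc 1 n) := by
    ext x
    simp [Nat.lt_succ_iff]
    omega
  rw [h2, Finset.sum_insert (by simp)]
  have h3 : Bv 0 * pv (n-0)^2 = pv n ^2 := by
    simp [show Bv 0 = 1 from by decide]
  rw [h3]
  congr 1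
  apply Finset.sum_congr rfl
  intro k hk
  have hk1 : 1 ≤ k := (Finset.mem_Icc.mp hk).1
  obtain ⟨m, rfl⟩ : ∃ m, k = m+1 := ⟨k-1, by omega⟩
  rw [hBC]

/-- Identity 9 of the paper. Note c_{l-5} is 0 for l < 5 (negative index). -/
theorem stmt_12 (T : ℕ → ℤ) (hT0 : T 0 = 0) (hT1 : T 1 = 0) (hT2 : T 2 = 1)
    (hTrec : ∀ n, T (n + 3) = T (n + 2) + T (n + 1) + T n)
    (c : ℕ → ℤ) (hc0 : c 0 = 1) (hc1 : c 1 = 1) (hc2 : c 2 = 1)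
    (hcrec : ∀ n, c (n + 3) = c (n + 2) + c n)
    (p : ℕ → ℤ) (hp0 : p 0 = 1) (hp1 : p 1 = 0) (hp2 : p 2 = 1)
    (hprec : ∀ n, p (n + 3) = p (n + 1) + p n) :
    ∀ n : ℕ, (T (n + 2))^2 = (p n)^2 + ∑ k ∈ Finset.Icc 1 n, ∑ l ∈ Finset.Icc 1 k,
      (4 * (T l + T (l - 1)) + (if l = 1 then 1 else 0) - 2 * (if l = 2 then 1 else 0)
        - 2 * (if 5 ≤ l then c (l - 5) else 0))
        * (T (k - l + 2))^2 * (p (n - k))^2 := by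
  have hT : ∀ n, T n = Tv n := by
    intro n
    induction n using Nat.strong_induction_on with
    | _ n ih =>
      match n with
      | 0 => exact hT0
      | 1 => exact hT1
      | 2 => exact hT2
      | (k+3) =>
        rw [hTrec k, ih (k+2) (by omega), ih (k+1) (by omega), ih k (by omega)]
        exact (hTv3 k).symm
  have hc : ∀ n, c n = cv n := by
    intro n
    induction n using Nat.strong_induction_on with
    | _ n ih =>
      match n with
      | 0 => exact hc0
      | 1 => exact hc1
      | 2 => exact hc2
      | (k+3) =>
        rw [hcrec k, ih (k+2) (by omega), ih k (by omega)]
        rfl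
  have hp : ∀ n, p n = pv n := by
    intro n
    induction n using Nat.strong_induction_on with
    | _ n ih =>
      match n with
      | 0 => exact hp0
      | 1 => exact hp1
      | 2 => exact hp2
      | (k+3) =>
        rw [hprec k, ih (k+1) (by omega), ih k (by omega)]
        rfl
  intro n
  have hsum : ∑ k ∈ Finset.Icc 1 n, ∑ l ∈ Finset.Icc 1 k,
      (4 * (T l + T (l - 1)) + (if l = 1 then 1 else 0) - 2 * (if l = 2 then 1 else 0)
        - 2 * (if 5 ≤ l then c (l - 5) else 0))
        * (T (k - l + 2))^2 * (p (n - k))^2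
      = ∑ k ∈ Finset.Icc 1 n, ∑ l ∈ Finset.Icc 1 k, Av l * Tv (k-l+2)^2 * pv (n-k)^2 := by
    refine Finset.sum_congr rfl fun k _ => Finset.sum_congr rfl fun l _ => ?_
    have hco : (if 5 ≤ l then c (l - 5) else 0) = Ev (l-3) := by
      by_cases h5 : 5 ≤ l
      · rw [if_pos h5, hc (l-5), hEcv (l-5)]
        congr 1
        omega
      · rw [if_neg h5]
        interval_cases l <;> rfl
    rw [hT l, hT (l-1), hT (k-l+2), hp (n-k), hco]
    rfl
  rw [hT (n+2), hp n, hsum, ← hRHSexpand n]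
  exact key_s12 n
end

section
/- Let T be the tribonacci sequence (T_0 = T_1 = 0, T_2 = 1, T_n = T_{n-1} + T_{n-2} + T_{n-3}). Then for all n ≥ 2, T_{n+1} · T_n = ∑_{l=2}^{n} (T_l + T_{l-2}) · T_{n-l+2}^2, where T at negative indices is 0. -/
open Finset

private lemma keyF (T : ℕ → ℤ) (hT0 : T 0 = 0) (hT1 : T 1 = 0) (hT2 : T 2 = 1)
    (hTrec : ∀ n, T (n + 3) = T (n + 2) + T (n + 1) + T n) :
    ∀ m, T (m+4) * T (m+2) + T (m+3) * T (m+1) + T (m+2) * T m + 2 * T (m+3)^2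
      = T (m+5) * T (m+3) := by
  intro m
  induction m with
  | zero =>
    have h3 := hTrec 0
    have h4 := hTrec 1
    have h5 := hTrec 2
    nlinarith [h3, h4, h5]
  | succ k ih =>
    have r3 := hTrec (k+3)
    have r2 := hTrec (k+2)
    have r1 := hTrec (k+1)
    have r0 := hTrec k
    show T (k+5) * T (k+3) + T (k+4) * T (k+2) + T (k+3) * T (k+1) + 2 * T (k+4)^2
      = T (k+6) * T (k+4)
    linear_combination ih - T (k+4) * r3 + 2 * T (k+3) * r2 - T (k+4) * r2
      + T (k+2) * r0 - T (k+2) * r1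

private lemma auxD (T : ℕ → ℤ) (hT0 : T 0 = 0) (hT1 : T 1 = 0) (hT2 : T 2 = 1)
    (hTrec : ∀ n, T (n + 3) = T (n + 2) + T (n + 1) + T n) :
    ∀ m, 2 * ∑ j ∈ range (m+1), T (m - j) * T (j+2)^2 = T (m+2) * T m ∧
         2 * ∑ j ∈ range (m+1), T (m+1 - j) * T (j+2)^2 = T (m+3) * T (m+1) ∧
         2 * ∑ j ∈ range (m+1), T (m+2 - j) * T (j+2)^2 = T (m+4) * T (m+2) := by
  intro m
  induction m with
  | zero =>
    have h3 := hTrec 0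
    have h4 := hTrec 1
    refine ⟨by simp [hT0], by simp [hT1], by simp [hT2]; nlinarith [h3, h4]⟩
  | succ k ih =>
    obtain ⟨ih0, ih1, ih2⟩ := ih
    refine ⟨?_, ?_, ?_⟩
    · rw [Finset.sum_range_succ]
      have e1 : k + 1 - (k + 1) = 0 := by omega
      rw [e1, hT0]
      linarith [ih1]
    · rw [Finset.sum_range_succ]
      have e1 : k + 1 + 1 - (k + 1) = 1 := by omega
      rw [e1, hT1]
      show 2 * (∑ j ∈ range (k+1), T (k + 2 - j) * T (j+2)^2 + 0 * T (k+1+2)^2)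
        = T (k+4) * T (k+2)
      linarith [ih2]
    · rw [Finset.sum_range_succ]
      have e1 : k + 1 + 2 - (k + 1) = 2 := by omega
      rw [e1, hT2]
      have hsplit : ∑ j ∈ range (k+1), T (k + 1 + 2 - j) * T (j+2)^2
          = ∑ j ∈ range (k+1),
              (T (k + 2 - j) * T (j+2)^2 + T (k + 1 - j) * T (j+2)^2
                + T (k - j) * T (j+2)^2) := by
        apply Finset.sum_congr rfl
        intro j hj
        simp only [Finset.mem_range] at hj
        have e2 : k + 1 + 2 - j = (k - j) + 3 := by omega
        have e3 : k + 2 - j = (k - j) + 2 := by omega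
        have e4 : k + 1 - j = (k - j) + 1 := by omega
        rw [e2, e3, e4, hTrec (k - j)]
        ring
      rw [hsplit, Finset.sum_add_distrib, Finset.sum_add_distrib]
      have hk := keyF T hT0 hT1 hT2 hTrec k
      show 2 * (∑ j ∈ range (k+1), T (k + 2 - j) * T (j+2)^2
          + ∑ j ∈ range (k+1), T (k + 1 - j) * T (j+2)^2
          + ∑ j ∈ range (k+1), T (k - j) * T (j+2)^2 + 1 * T (k+1+2)^2)
        = T (k+5) * T (k+3)
      have e5 : (1 : ℤ) * T (k+1+2)^2 = T (k+3)^2 := by ring_nf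
      nlinarith [ih0, ih1, ih2, hk]

/-- Identity 10 of the paper. -/
theorem stmt_13 (T : ℕ → ℤ) (hT0 : T 0 = 0) (hT1 : T 1 = 0) (hT2 : T 2 = 1)
    (hTrec : ∀ n, T (n + 3) = T (n + 2) + T (n + 1) + T n) :
    ∀ n : ℕ, 2 ≤ n →
      T (n + 1) * T n = ∑ l ∈ Finset.Icc 2 n, (T l + T (l - 2)) * (T (n - l + 2))^2 := by
  intro n hn
  obtain ⟨m, rfl⟩ : ∃ m, n = m + 2 := ⟨n - 2, by omega⟩
  obtain ⟨h0, h1, h2⟩ := auxD T hT0 hT1 hT2 hTrec m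
  have hIcc : Finset.Icc 2 (m + 2) = Finset.Ico 2 (m + 3) :=
    (Finset.Ico_add_one_right_eq_Icc 2 (m + 2)).symm
  rw [hIcc, Finset.sum_Ico_eq_sum_range, show m + 3 - 2 = m + 1 from by omega]
  have hcongr : ∑ j ∈ range (m+1), (T (2 + j) + T (2 + j - 2)) * T (m + 2 - (2 + j) + 2)^2
      = ∑ j ∈ range (m+1), (T (j + 2) * T (m - j + 2)^2 + T j * T (m - j + 2)^2) := by
    apply Finset.sum_congr rfl
    intro j hj
    simp only [Finset.mem_range] at hj
    have e1 : 2 + j = j + 2 := by omega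
    have e2 : 2 + j - 2 = j := by omega
    have e3 : m + 2 - (2 + j) + 2 = m - j + 2 := by omega
    rw [e2, e3, e1]
    ring
  rw [hcongr, Finset.sum_add_distrib]
  have hrefl1 : ∑ j ∈ range (m+1), T (j + 2) * T (m - j + 2)^2
      = ∑ j ∈ range (m+1), T (m + 2 - j) * T (j + 2)^2 := by
    rw [← Finset.sum_range_reflect]
    apply Finset.sum_congr rfl
    intro j hj
    simp only [Finset.mem_range] at hj
    have e1 : m + 1 - 1 - j + 2 = m + 2 - j := by omega
    have e2 : m - (m + 1 - 1 - j) + 2 = j + 2 := by omega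
    rw [e1, e2]
  have hrefl0 : ∑ j ∈ range (m+1), T j * T (m - j + 2)^2
      = ∑ j ∈ range (m+1), T (m - j) * T (j + 2)^2 := by
    rw [← Finset.sum_range_reflect]
    apply Finset.sum_congr rfl
    intro j hj
    simp only [Finset.mem_range] at hj
    have e1 : m + 1 - 1 - j = m - j := by omega
    rw [e1]
    have e2 : m - (m - j) + 2 = j + 2 := by omega
    rw [e2]
  rw [hrefl1, hrefl0]
  have r1 := hTrec (m + 1)
  have r0 := hTrec m
  show T (m + 3) * T (m + 2) = _
  have key : 2 * ((∑ j ∈ range (m+1), T (m + 2 - j) * T (j + 2)^2)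
      + ∑ j ∈ range (m+1), T (m - j) * T (j + 2)^2) = 2 * (T (m + 3) * T (m + 2)) := by
    linear_combination h2 + h0 + T (m + 2) * r1 - T (m + 2) * r0
  linarith [key]
end

section
/- Let T be the tribonacci sequence (T_0 = T_1 = 0, T_2 = 1, T_n = T_{n-1} + T_{n-2} + T_{n-3}). Then for all n ≥ 3, T_{n+1} · T_{n-1} = 2 ∑_{l=3}^{n} T_{l-1} · T_{n-l+2}^2. -/
/-- Identity 11 of the paper. -/
theorem stmt_14 (T : ℕ → ℤ) (hT0 : T 0 = 0) (hT1 : T 1 = 0) (hT2 : T 2 = 1)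
    (hTrec : ∀ n, T (n + 3) = T (n + 2) + T (n + 1) + T n) :
    ∀ n : ℕ, 3 ≤ n →
      T (n + 1) * T (n - 1) = 2 * ∑ l ∈ Finset.Icc 3 n, T (l - 1) * (T (n - l + 2))^2 := by
  have h3 : T 3 = 1 := by simpa [hT0, hT1, hT2] using hTrec 0
  have h4 : T 4 = 2 := by simpa [hT1, hT2, h3] using hTrec 1
  have h5 : T 5 = 4 := by simpa [hT2, h3, h4] using hTrec 2
  have h6 : T 6 = 7 := by have := hTrec 3; rw [h5, h4, h3] at this; linarith
  set S : ℕ → ℤ := fun m => ∑ j ∈ Finset.range (m + 1), T (m - j + 2) * T (j + 2) ^ 2 with hS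
  have hrec : ∀ k, S (k + 3) = S (k + 2) + T (k + 5) ^ 2 + S (k + 1) + S k := by
    intro k
    have e1 : S (k + 3) = (∑ j ∈ Finset.range (k + 3), T (k + 3 - j + 2) * T (j + 2) ^ 2)
        + T (k + 5) ^ 2 := by
      rw [hS]
      simp only []
      rw [show k + 3 + 1 = (k + 3) + 1 from rfl, Finset.sum_range_succ,
        show k + 3 - (k + 3) + 2 = 2 from by omega, hT2,
        show k + 3 + 2 = k + 5 from by omega, one_mul]
    have step : ∀ j ∈ Finset.range (k + 3), T (k + 3 - j + 2) * T (j + 2) ^ 2 =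
        T (k + 2 - j + 2) * T (j + 2) ^ 2 + T (k + 2 - j + 1) * T (j + 2) ^ 2
          + T (k + 2 - j) * T (j + 2) ^ 2 := by
      intro j hj
      rw [Finset.mem_range] at hj
      rw [show k + 3 - j + 2 = k + 2 - j + 3 from by omega, hTrec]
      ring
    have e2 : (∑ j ∈ Finset.range (k + 3), T (k + 2 - j + 2) * T (j + 2) ^ 2) = S (k + 2) := by
      rw [hS]
    have e3 : (∑ j ∈ Finset.range (k + 3), T (k + 2 - j + 1) * T (j + 2) ^ 2) = S (k + 1) := by
      rw [Finset.sum_range_succ, show k + 2 - (k + 2) + 1 = 1 from by omega, hT1, zero_mul,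
        add_zero, hS]
      simp only []
      rw [show k + 1 + 1 = k + 2 from by omega]
      exact Finset.sum_congr rfl (fun j hj => by
        rw [Finset.mem_range] at hj
        rw [show k + 2 - j + 1 = k + 1 - j + 2 from by omega])
    have e4 : (∑ j ∈ Finset.range (k + 3), T (k + 2 - j) * T (j + 2) ^ 2) = S k := by
      rw [Finset.sum_range_succ, show k + 2 - (k + 2) = 0 from by omega, hT0, zero_mul,
        add_zero, Finset.sum_range_succ, show k + 2 - (k + 1) = 1 from by omega, hT1, zero_mul,
        add_zero, hS]
      simp only []
      exact Finset.sum_congr rfl (fun j hj => by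
        rw [Finset.mem_range] at hj
        rw [show k + 2 - j = k - j + 2 from by omega])
    rw [e1, Finset.sum_congr rfl step, Finset.sum_add_distrib, Finset.sum_add_distrib,
      e2, e3, e4]
    ring
  have key : ∀ m, 2 * S m = T (m + 4) * T (m + 2) := by
    intro m
    induction m using Nat.strong_induction_on with
    | _ m ih =>
      rcases m with _ | _ | _ | k
      · simp [hS, Finset.sum_range_succ, hT2, h4]
      · simp [hS, Finset.sum_range_succ, hT2, h3, h5]
      · simp only [hS, Finset.sum_range_succ, Finset.sum_range_zero]
        norm_num [hT2, h3, h4, h6]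
      · have i0 := ih k (by omega)
        have i1 := ih (k + 1) (by omega)
        have i2 := ih (k + 2) (by omega)
        rw [hrec k]
        rw [show k + 1 + 4 = k + 5 from by omega, show k + 1 + 2 = k + 3 from by omega] at i1
        rw [show k + 2 + 4 = k + 6 from by omega, show k + 2 + 2 = k + 4 from by omega] at i2
        rw [show k + 3 + 4 = k + 7 from by omega, show k + 3 + 2 = k + 5 from by omega]
        have r7 : T (k + 7) = T (k + 6) + T (k + 5) + T (k + 4) := hTrec (k + 4)
        have r6 : T (k + 6) = T (k + 5) + T (k + 4) + T (k + 3) := hTrec (k + 3)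
        have r5 : T (k + 5) = T (k + 4) + T (k + 3) + T (k + 2) := hTrec (k + 2)
        have r4 : T (k + 4) = T (k + 3) + T (k + 2) + T (k + 1) := hTrec (k + 1)
        have r3 : T (k + 3) = T (k + 2) + T (k + 1) + T k := hTrec k
        rw [mul_add, mul_add, mul_add, i0, i1, i2, r7, r6, r5, r4, r3]
        ring
  intro n hn
  obtain ⟨m, rfl⟩ : ∃ m, n = m + 3 := ⟨n - 3, by omega⟩
  have hsum : (∑ l ∈ Finset.Icc 3 (m + 3), T (l - 1) * T (m + 3 - l + 2) ^ 2) = S m := by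
    rw [← Finset.Ico_add_one_right_eq_Icc, Finset.sum_Ico_eq_sum_range,
      show m + 3 + 1 - 3 = m + 1 from by omega, hS]
    simp only []
    rw [← Finset.sum_range_reflect (fun j => T (m - j + 2) * T (j + 2) ^ 2) (m + 1)]
    refine Finset.sum_congr rfl (fun j hj => ?_)
    rw [Finset.mem_range] at hj
    rw [show 3 + j - 1 = j + 2 from by omega,
      show m + 3 - (3 + j) + 2 = m - j + 2 from by omega,
      show m + 1 - 1 - j = m - j from by omega,
      show m - (m - j) + 2 = j + 2 from by omega]
  rw [show m + 3 + 1 = m + 4 from by omega, show m + 3 - 1 = m + 2 from by omega,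
    hsum, ← key m]
end

section
/- Let A_n denote the number of ways to tile an n-board (a 1×n strip of unit square cells, each cell divided into a left and right half-cell slot) using half-squares (tiles occupying one slot), (1/2,1/2;2)-combs (two teeth each occupying one slot, separated by a gap of one slot), and (1/2,1/2;3)-combs (three teeth each occupying one slot, with two gaps of one slot between consecutive teeth), where every slot is covered exactly once. Then A_n equals T_{n+2}^2, where T is the tribonacci sequence (T_0 = T_1 = 0, T_2 = 1, T_n = T_{n-1} + T_{n-2} + T_{n-3}). -/
/-- A tiling of an n-board (2n linearly ordered slots, numbered 0,…,2n−1) by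
(1/2,1/2;m)-combs with m ∈ {1,2,3}: a tile is recorded as a pair (start slot, m),
occupying slots start, start+2, …, start+2(m−1).  Every slot of the board is
covered by exactly one tooth, and all teeth lie on the board. -/
def IsCombTiling (n : ℕ) (P : Finset (ℕ × ℕ)) : Prop :=
  (∀ p ∈ P, 1 ≤ p.2 ∧ p.2 ≤ 3) ∧
  (∀ p ∈ P, ∀ j < p.2, p.1 + 2 * j < 2 * n) ∧
  (∀ s < 2 * n, ∃! p : ℕ × ℕ, p ∈ P ∧ ∃ j < p.2, s = p.1 + 2 * j)

namespace CombAux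

/-- `p` covers slot `s`. -/
def Covers (p : ℕ × ℕ) (s : ℕ) : Prop := ∃ j < p.2, s = p.1 + 2 * j

/-- `l` is a composition of `k` into parts 1, 2, 3. -/
def IsComp (l : List ℕ) (k : ℕ) : Prop := (∀ x ∈ l, 1 ≤ x ∧ x ≤ 3) ∧ l.sum = k

/-- The set of tiles obtained by laying the combs listed in `l` consecutively,
starting at slot `o`, on slots of the parity of `o`. -/
def G : ℕ → List ℕ → Finset (ℕ × ℕ)
  | _, [] => ∅
  | o, m :: t => insert (o, m) (G (o + 2 * m) t)

/-- The finset of compositions of `n` into parts 1, 2, 3. -/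
def compF : ℕ → Finset (List ℕ)
  | 0 => {[]}
  | 1 => {[1]}
  | 2 => {[1, 1], [2]}
  | (n + 3) =>
      ((compF (n + 2)).image (1 :: ·)) ∪ ((compF (n + 1)).image (2 :: ·)) ∪
        ((compF n).image (3 :: ·))

lemma sum_zero {l : List ℕ} (h1 : ∀ x ∈ l, 1 ≤ x) (h0 : l.sum = 0) : l = [] := by
  cases l with
  | nil => rfl
  | cons m t =>
      exfalso
      have := h1 m (List.mem_cons_self)
      simp [List.sum_cons] at h0
      omega

lemma mem_compF : ∀ k l, l ∈ compF k ↔ IsComp l k := by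
  intro k
  induction k using Nat.strong_induction_on with
  | _ k ih =>
    match k with
    | 0 =>
        intro l
        constructor
        · intro h
          simp [compF] at h
          subst h
          exact ⟨by simp, by simp⟩
        · rintro ⟨h1, h2⟩
          have := sum_zero (fun x hx => (h1 x hx).1) h2
          simp [compF, this]
    | 1 =>
        intro l
        constructor
        · intro h
          simp [compF] at h
          subst h
          exact ⟨by simp, by simp⟩
        · rintro ⟨h1, h2⟩
          cases l with
          | nil => simp at h2
          | cons m t =>
              have hm := h1 m (List.mem_cons_self)
              simp [List.sum_cons] at h2
              have hm1 : m = 1 := by omega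
              have ht : t.sum = 0 := by omega
              have := sum_zero (fun x hx => (h1 x (List.mem_cons_of_mem _ hx)).1) ht
              simp [compF, hm1, this]
    | 2 =>
        intro l
        constructor
        · intro h
          simp [compF] at h
          rcases h with h | h <;> subst h <;> exact ⟨by intro x hx; simp at hx; omega, by simp⟩
        · rintro ⟨h1, h2⟩
          cases l with
          | nil => simp at h2
          | cons m t =>
              have hm := h1 m (List.mem_cons_self)
              simp [List.sum_cons] at h2
              have ht1 : ∀ x ∈ t, 1 ≤ x := fun x hx => (h1 x (List.mem_cons_of_mem _ hx)).1
              rcases Nat.lt_or_ge m 2 with hc | hc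
              · have hm1 : m = 1 := by omega
                have ht : t.sum = 1 := by omega
                cases t with
                | nil => simp at ht
                | cons m' t' =>
                    have hm' := ht1 m' (List.mem_cons_self)
                    simp [List.sum_cons] at ht
                    have hm'1 : m' = 1 := by omega
                    have ht' : t'.sum = 0 := by omega
                    have := sum_zero (fun x hx => ht1 x (List.mem_cons_of_mem _ hx)) ht'
                    simp [compF, hm1, hm'1, this]
              · have hm2 : m = 2 := by omega
                have ht : t.sum = 0 := by omega
                have := sum_zero ht1 ht
                simp [compF, hm2, this]
    | (n + 3) =>
        intro l
        constructor
        · intro h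
          simp only [compF, Finset.mem_union, Finset.mem_image] at h
          rcases h with (⟨a, ha, rfl⟩ | ⟨a, ha, rfl⟩) | ⟨a, ha, rfl⟩ <;>
          · rcases (ih _ (by omega) a).1 ha with ⟨h1, h2⟩
            refine ⟨?_, by simp [List.sum_cons, h2]; omega⟩
            intro x hx
            rcases List.mem_cons.1 hx with rfl | hx
            · omega
            · exact h1 x hx
        · rintro ⟨h1, h2⟩
          cases l with
          | nil => simp at h2
          | cons m t =>
              have hm := h1 m (List.mem_cons_self)
              simp [List.sum_cons] at h2
              have ht1 : ∀ x ∈ t, 1 ≤ x ∧ x ≤ 3 := fun x hx => h1 x (List.mem_cons_of_mem _ hx)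
              simp only [compF, Finset.mem_union, Finset.mem_image]
              obtain ⟨hma, hmb⟩ := hm
              interval_cases m
              · exact Or.inl (Or.inl ⟨t, (ih _ (by omega) t).2 ⟨ht1, by omega⟩, rfl⟩)
              · exact Or.inl (Or.inr ⟨t, (ih _ (by omega) t).2 ⟨ht1, by omega⟩, rfl⟩)
              · exact Or.inr ⟨t, (ih _ (by omega) t).2 ⟨ht1, by omega⟩, rfl⟩

lemma cons_inj (m : ℕ) : Function.Injective (m :: · : List ℕ → List ℕ) := by
  intro a b h
  simpa using h

lemma card_compF_rec (n : ℕ) :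
    (compF (n + 3)).card = (compF (n + 2)).card + (compF (n + 1)).card + (compF n).card := by
  have d12 : Disjoint ((compF (n + 2)).image (1 :: ·)) ((compF (n + 1)).image (2 :: ·)) := by
    simp only [Finset.disjoint_left, Finset.mem_image]
    rintro l ⟨a, _, rfl⟩ ⟨b, _, h⟩
    simp at h
  have d13 : Disjoint (((compF (n + 2)).image (1 :: ·)) ∪ ((compF (n + 1)).image (2 :: ·)))
      ((compF n).image (3 :: ·)) := by
    simp only [Finset.disjoint_left, Finset.mem_union, Finset.mem_image]
    rintro l (⟨a, _, rfl⟩ | ⟨a, _, rfl⟩) ⟨b, _, h⟩ <;> simp at h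
  rw [show compF (n + 3) = ((compF (n + 2)).image (1 :: ·)) ∪ ((compF (n + 1)).image (2 :: ·)) ∪
        ((compF n).image (3 :: ·)) from rfl,
      Finset.card_union_of_disjoint d13, Finset.card_union_of_disjoint d12,
      Finset.card_image_of_injective _ (cons_inj 1), Finset.card_image_of_injective _ (cons_inj 2),
      Finset.card_image_of_injective _ (cons_inj 3)]

lemma G_mem : ∀ (l : List ℕ) (o : ℕ) (p : ℕ × ℕ), p ∈ G o l →
    p.2 ∈ l ∧ ∃ t, p.1 = o + 2 * t ∧ t + p.2 ≤ l.sum := by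
  intro l
  induction l with
  | nil => intro o p hp; simp [G] at hp
  | cons m tl ih =>
      intro o p hp
      simp only [G, Finset.mem_insert] at hp
      rcases hp with rfl | hp
      · exact ⟨List.mem_cons_self, 0, by simp, by simp [List.sum_cons]⟩
      · rcases ih _ p hp with ⟨h1, t, ht1, ht2⟩
        exact ⟨List.mem_cons_of_mem _ h1, m + t, by omega, by simp [List.sum_cons]; omega⟩

lemma G_cover_exists : ∀ (l : List ℕ), (∀ x ∈ l, 1 ≤ x) → ∀ (o t : ℕ), t < l.sum →
    ∃ p ∈ G o l, Covers p (o + 2 * t) := by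
  intro l
  induction l with
  | nil => intro _ o t ht; simp at ht
  | cons m tl ih =>
      intro h1 o t ht
      simp [List.sum_cons] at ht
      rcases Nat.lt_or_ge t m with hc | hc
      · exact ⟨(o, m), by simp [G], t, hc, rfl⟩
      · have := ih (fun x hx => h1 x (List.mem_cons_of_mem _ hx)) (o + 2 * m) (t - m) (by omega)
        rcases this with ⟨p, hp, j, hj, hcov⟩
        refine ⟨p, by simp [G, hp], j, hj, ?_⟩
        omega

lemma G_unique : ∀ (l : List ℕ) (o s : ℕ) (p q : ℕ × ℕ), p ∈ G o l → q ∈ G o l →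
    Covers p s → Covers q s → p = q := by
  intro l
  induction l with
  | nil => intro o s p q hp; simp [G] at hp
  | cons m tl ih =>
      intro o s p q hp hq hcp hcq
      have key : ∀ r : ℕ × ℕ, r ∈ G (o + 2 * m) tl → Covers r s → ¬ s < o + 2 * m := by
        intro r hr ⟨j, hj, hcov⟩
        rcases (G_mem _ _ _ hr).2 with ⟨t, ht, _⟩
        omega
      simp only [G, Finset.mem_insert] at hp hq
      rcases hp with rfl | hp <;> rcases hq with rfl | hq
      · rfl
      · exfalso
        rcases hcp with ⟨j, hj, rfl⟩
        exact key q hq hcq (by omega)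
      · exfalso
        rcases hcq with ⟨j, hj, rfl⟩
        exact key p hp hcp (by omega)
      · exact ih _ _ _ _ hp hq hcp hcq

lemma G_inj : ∀ (l l' : List ℕ), (∀ x ∈ l, 1 ≤ x) → (∀ x ∈ l', 1 ≤ x) → ∀ o,
    G o l = G o l' → l = l' := by
  intro l
  induction l with
  | nil =>
      intro l' _ h1' o he
      cases l' with
      | nil => rfl
      | cons m t =>
          exfalso
          have : (o, m) ∈ G o ([] : List ℕ) := by rw [he]; simp [G]
          simp [G] at this
  | cons m t ih =>
      intro l' h1 h1' o he
      cases l' with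
      | nil =>
          exfalso
          have : (o, m) ∈ G o ([] : List ℕ) := by rw [← he]; simp [G]
          simp [G] at this
      | cons m' t' =>
          have hm : m = m' := by
            have : (o, m) ∈ G o (m' :: t') := by rw [← he]; simp [G]
            simp only [G, Finset.mem_insert] at this
            rcases this with h | h
            · exact (Prod.mk.injEq .. ▸ h).2
            · exfalso
              rcases (G_mem _ _ _ h).2 with ⟨k, hk, _⟩
              have := h1' m' (List.mem_cons_self)
              simp at hk
              omega
          subst hm
          have htail : G (o + 2 * m) t = G (o + 2 * m) t' := by
            have hm1 := h1 m (List.mem_cons_self)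
            ext q
            constructor
            · intro hq
              have hq' : q ∈ G o (m :: t') := by rw [← he]; simp [G, hq]
              simp only [G, Finset.mem_insert] at hq'
              rcases hq' with rfl | hq' 
              · exfalso
                rcases (G_mem _ _ _ hq).2 with ⟨k, hk, _⟩
                simp at hk; omega
              · exact hq'
            · intro hq
              have hq' : q ∈ G o (m :: t) := by rw [he]; simp [G, hq]
              simp only [G, Finset.mem_insert] at hq'
              rcases hq' with rfl | hq'
              · exfalso
                rcases (G_mem _ _ _ hq).2 with ⟨k, hk, _⟩
                simp at hk; omega
              · exact hq'
          have := ih t' (fun x hx => h1 x (List.mem_cons_of_mem _ hx))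
            (fun x hx => h1' x (List.mem_cons_of_mem _ hx)) (o + 2 * m) htail
          rw [this]

lemma strip : ∀ (k o : ℕ) (Q : Finset (ℕ × ℕ)),
    (∀ p ∈ Q, 1 ≤ p.2 ∧ p.2 ≤ 3) →
    (∀ p ∈ Q, ∃ t, p.1 = o + 2 * t ∧ t + p.2 ≤ k) →
    (∀ t < k, ∃! p : ℕ × ℕ, p ∈ Q ∧ Covers p (o + 2 * t)) →
    ∃ l, IsComp l k ∧ Q = G o l := by
  intro k
  induction k using Nat.strong_induction_on with
  | _ k ih =>
    intro o Q hsz hpos hcov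
    rcases Nat.eq_zero_or_pos k with rfl | hk
    · refine ⟨[], ⟨by simp, by simp⟩, ?_⟩
      rw [show G o [] = (∅ : Finset (ℕ × ℕ)) from rfl]
      apply Finset.eq_empty_of_forall_notMem
      intro p hp
      rcases hpos p hp with ⟨t, _, ht2⟩
      have := (hsz p hp).1
      omega
    · obtain ⟨p₀, ⟨hp₀Q, hp₀c⟩, huniq⟩ := hcov 0 hk
      rcases hpos p₀ hp₀Q with ⟨t₀, ht₀, ht₀2⟩
      rcases hp₀c with ⟨j₀, hj₀, hcov₀⟩
      have hstart : p₀.1 = o ∧ j₀ = 0 := by omega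
      set m := p₀.2 with hm
      have hm13 := hsz p₀ hp₀Q
      have hmk : m ≤ k := by omega
      have hp₀ : p₀ = (o, m) := by
        rcases p₀ with ⟨a, b⟩; simp [hm]; exact hstart.1
      set Q' := Q.erase (o, m) with hQ'
      have hA : ∀ q ∈ Q', ∃ t', q.1 = (o + 2 * m) + 2 * t' ∧ t' + q.2 ≤ k - m := by
        intro q hq
        have hqQ : q ∈ Q := Finset.mem_of_mem_erase hq
        have hqne : q ≠ (o, m) := Finset.ne_of_mem_erase hq
        rcases hpos q hqQ with ⟨t, ht, ht2⟩
        have htm : m ≤ t := by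
          by_contra hc
          push_neg at hc
          -- q covers its own start slot o + 2t with t < m, but p₀ covers it too
          have hq2 := (hsz q hqQ).1
          have hqcov : Covers q (o + 2 * t) := ⟨0, by omega, by omega⟩
          have hpcov : Covers p₀ (o + 2 * t) := ⟨t, by omega, by omega⟩
          obtain ⟨r, _, hr⟩ := hcov t (by omega)
          have h1 := hr q ⟨hqQ, hqcov⟩
          have h2 := hr p₀ ⟨hp₀Q, hpcov⟩
          rw [hp₀] at h2
          exact hqne (h1.trans h2.symm)
        exact ⟨t - m, by omega, by omega⟩
      have hB : ∀ t' < k - m, ∃! q : ℕ × ℕ, q ∈ Q' ∧ Covers q ((o + 2 * m) + 2 * t') := by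
        intro t' ht'
        obtain ⟨q, ⟨hqQ, hqc⟩, hq⟩ := hcov (m + t') (by omega)
        have hrw : o + 2 * (m + t') = (o + 2 * m) + 2 * t' := by ring
        have hqne : q ≠ (o, m) := by
          rintro rfl
          rcases hqc with ⟨j, hj, hcov'⟩
          simp at hj hcov'
          omega
        refine ⟨q, ⟨Finset.mem_erase.2 ⟨hqne, hqQ⟩, hrw ▸ hqc⟩, ?_⟩
        rintro r ⟨hrQ', hrc⟩
        exact hq r ⟨Finset.mem_of_mem_erase hrQ', hrw ▸ hrc⟩
      obtain ⟨l', ⟨hl'1, hl'2⟩, hQ'eq⟩ := ih (k - m) (by omega) (o + 2 * m) Q'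
        (fun p hp => hsz p (Finset.mem_of_mem_erase hp)) hA hB
      refine ⟨m :: l', ⟨?_, by simp [List.sum_cons, hl'2]; omega⟩, ?_⟩
      · intro x hx
        rcases List.mem_cons.1 hx with rfl | hx
        · exact hm13
        · exact hl'1 x hx
      · rw [show G o (m :: l') = insert (o, m) (G (o + 2 * m) l') from rfl, ← hQ'eq, hQ']
        rw [Finset.insert_erase (hp₀ ▸ hp₀Q)]

lemma covers_parity {p : ℕ × ℕ} {s : ℕ} (h : Covers p s) : s % 2 = p.1 % 2 := by
  rcases h with ⟨j, _, rfl⟩; omega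

lemma tiling_iff (n : ℕ) (P : Finset (ℕ × ℕ)) :
    IsCombTiling n P ↔ ∃ l l', IsComp l n ∧ IsComp l' n ∧ P = G 0 l ∪ G 1 l' := by
  constructor
  · rintro ⟨h1, h2, h3⟩
    set Pe := P.filter (fun p => p.1 % 2 = 0) with hPe
    set Po := P.filter (fun p => p.1 % 2 = 1) with hPo
    have hsub : ∀ p ∈ Pe, p ∈ P := fun p hp => Finset.mem_of_mem_filter p hp
    have hsub' : ∀ p ∈ Po, p ∈ P := fun p hp => Finset.mem_of_mem_filter p hp
    have he : ∃ l, IsComp l n ∧ Pe = G 0 l := by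
      apply strip n 0 Pe (fun p hp => h1 p (hsub p hp))
      · intro p hp
        have hpar : p.1 % 2 = 0 := (Finset.mem_filter.1 hp).2
        have hb := h2 p (hsub p hp) (p.2 - 1) (by have := (h1 p (hsub p hp)).1; omega)
        exact ⟨p.1 / 2, by omega, by have := (h1 p (hsub p hp)).1; omega⟩
      · intro t ht
        obtain ⟨p, ⟨hpP, hpc⟩, hp⟩ := h3 (0 + 2 * t) (by omega)
        have hpar : p.1 % 2 = 0 := by have := covers_parity hpc; omega
        refine ⟨p, ⟨Finset.mem_filter.2 ⟨hpP, hpar⟩, hpc⟩, ?_⟩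
        rintro q ⟨hqP, hqc⟩
        exact hp q ⟨hsub q hqP, hqc⟩
    have ho : ∃ l, IsComp l n ∧ Po = G 1 l := by
      apply strip n 1 Po (fun p hp => h1 p (hsub' p hp))
      · intro p hp
        have hpar : p.1 % 2 = 1 := (Finset.mem_filter.1 hp).2
        have hb := h2 p (hsub' p hp) (p.2 - 1) (by have := (h1 p (hsub' p hp)).1; omega)
        exact ⟨p.1 / 2, by omega, by have := (h1 p (hsub' p hp)).1; omega⟩
      · intro t ht
        obtain ⟨p, ⟨hpP, hpc⟩, hp⟩ := h3 (1 + 2 * t) (by omega)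
        have hpar : p.1 % 2 = 1 := by have := covers_parity hpc; omega
        refine ⟨p, ⟨Finset.mem_filter.2 ⟨hpP, hpar⟩, hpc⟩, ?_⟩
        rintro q ⟨hqP, hqc⟩
        exact hp q ⟨hsub' q hqP, hqc⟩
    obtain ⟨l, hl, hle⟩ := he
    obtain ⟨l', hl', hlo⟩ := ho
    refine ⟨l, l', hl, hl', ?_⟩
    rw [← hle, ← hlo]
    ext p
    simp only [Finset.mem_union, hPe, hPo, Finset.mem_filter]
    constructor
    · intro hp; rcases Nat.even_or_odd p.1 with ⟨c, hc⟩ | ⟨c, hc⟩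
      · exact Or.inl ⟨hp, by omega⟩
      · exact Or.inr ⟨hp, by omega⟩
    · rintro (⟨hp, _⟩ | ⟨hp, _⟩) <;> exact hp
  · rintro ⟨l, l', ⟨hl1, hl2⟩, ⟨hl'1, hl'2⟩, rfl⟩
    have heven : ∀ p ∈ G 0 l, ∃ t, p.1 = 2 * t ∧ t + p.2 ≤ n := by
      intro p hp
      rcases (G_mem _ _ _ hp).2 with ⟨t, ht, ht2⟩
      exact ⟨t, by omega, by omega⟩
    have hodd : ∀ p ∈ G 1 l', ∃ t, p.1 = 1 + 2 * t ∧ t + p.2 ≤ n := by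
      intro p hp
      rcases (G_mem _ _ _ hp).2 with ⟨t, ht, ht2⟩
      exact ⟨t, by omega, by omega⟩
    refine ⟨?_, ?_, ?_⟩
    · intro p hp
      rcases Finset.mem_union.1 hp with hp | hp
      · exact hl1 _ ((G_mem _ _ _ hp).1)
      · exact hl'1 _ ((G_mem _ _ _ hp).1)
    · intro p hp j hj
      rcases Finset.mem_union.1 hp with hp | hp
      · rcases heven p hp with ⟨t, ht, ht2⟩; omega
      · rcases hodd p hp with ⟨t, ht, ht2⟩; omega
    · intro s hs
      rcases Nat.even_or_odd s with ⟨t, ht⟩ | ⟨t, ht⟩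
      · have hts : s = 0 + 2 * t := by omega
        obtain ⟨p, hp, hpc⟩ := G_cover_exists l (fun x hx => (hl1 x hx).1) 0 t (by omega)
        refine ⟨p, ⟨Finset.mem_union_left _ hp, hts ▸ hpc⟩, ?_⟩
        rintro q ⟨hqP, hqc⟩
        have hqc' : Covers q s := hqc
        rcases Finset.mem_union.1 hqP with hq | hq
        · exact G_unique l 0 s q p hq hp hqc' (hts ▸ hpc)
        · exfalso
          rcases hodd q hq with ⟨t', ht', _⟩
          have := covers_parity hqc'
          omega
      · have hts : s = 1 + 2 * t := by omega
        obtain ⟨p, hp, hpc⟩ := G_cover_exists l' (fun x hx => (hl'1 x hx).1) 1 t (by omega)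
        refine ⟨p, ⟨Finset.mem_union_right _ hp, hts ▸ hpc⟩, ?_⟩
        rintro q ⟨hqP, hqc⟩
        have hqc' : Covers q s := hqc
        rcases Finset.mem_union.1 hqP with hq | hq
        · exfalso
          rcases heven q hq with ⟨t', ht', _⟩
          have := covers_parity hqc'
          omega
        · exact G_unique l' 1 s q p hq hp hqc' (hts ▸ hpc)

lemma union_split (l l' a b : List ℕ) (hl : ∀ x ∈ l, 1 ≤ x) (hl' : ∀ x ∈ l', 1 ≤ x)
    (ha : ∀ x ∈ a, 1 ≤ x) (hb : ∀ x ∈ b, 1 ≤ x)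
    (h : G 0 l ∪ G 1 l' = G 0 a ∪ G 1 b) : l = a ∧ l' = b := by
  have hev : ∀ (c : List ℕ) p, p ∈ G 0 c → p.1 % 2 = 0 := by
    intro c p hp; rcases (G_mem _ _ _ hp).2 with ⟨t, ht, _⟩; omega
  have hod : ∀ (c : List ℕ) p, p ∈ G 1 c → p.1 % 2 = 1 := by
    intro c p hp; rcases (G_mem _ _ _ hp).2 with ⟨t, ht, _⟩; omega
  have h1 : G 0 l = G 0 a := by
    ext p
    constructor
    · intro hp
      have : p ∈ G 0 a ∪ G 1 b := h ▸ Finset.mem_union_left _ hp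
      rcases Finset.mem_union.1 this with h' | h'
      · exact h'
      · exact absurd (hod b p h') (by rw [hev l p hp]; omega)
    · intro hp
      have : p ∈ G 0 l ∪ G 1 l' := h ▸ Finset.mem_union_left _ hp
      rcases Finset.mem_union.1 this with h' | h'
      · exact h'
      · exact absurd (hod l' p h') (by rw [hev a p hp]; omega)
  have h2 : G 1 l' = G 1 b := by
    ext p
    constructor
    · intro hp
      have : p ∈ G 0 a ∪ G 1 b := h ▸ Finset.mem_union_right _ hp
      rcases Finset.mem_union.1 this with h' | h'
      · exact absurd (hev a p h') (by rw [hod l' p hp]; omega)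
      · exact h'
    · intro hp
      have : p ∈ G 0 l ∪ G 1 l' := h ▸ Finset.mem_union_right _ hp
      rcases Finset.mem_union.1 this with h' | h'
      · exact absurd (hev l p h') (by rw [hod b p hp]; omega)
      · exact h'
  exact ⟨G_inj l a hl ha 0 h1, G_inj l' b hl' hb 1 h2⟩

lemma card_eq (n : ℕ) :
    Nat.card {P : Finset (ℕ × ℕ) // IsCombTiling n P} = (compF n).card * (compF n).card := by
  have hbij : Function.Bijective
      (fun q : {q : List ℕ × List ℕ // q ∈ compF n ×ˢ compF n} =>
        (⟨G 0 q.1.1 ∪ G 1 q.1.2, by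
          rcases Finset.mem_product.1 q.2 with ⟨h1, h2⟩
          exact (tiling_iff n _).2 ⟨q.1.1, q.1.2, (mem_compF n _).1 h1, (mem_compF n _).1 h2, rfl⟩⟩ :
          {P : Finset (ℕ × ℕ) // IsCombTiling n P})) := by
    constructor
    · rintro ⟨⟨a1, a2⟩, ha⟩ ⟨⟨b1, b2⟩, hb⟩ hab
      rcases Finset.mem_product.1 ha with ⟨ha1, ha2⟩
      rcases Finset.mem_product.1 hb with ⟨hb1, hb2⟩
      have h : G 0 a1 ∪ G 1 a2 = G 0 b1 ∪ G 1 b2 := congrArg Subtype.val hab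
      have := union_split a1 a2 b1 b2
        (fun x hx => ((mem_compF n _).1 ha1).1 x hx |>.1)
        (fun x hx => ((mem_compF n _).1 ha2).1 x hx |>.1)
        (fun x hx => ((mem_compF n _).1 hb1).1 x hx |>.1)
        (fun x hx => ((mem_compF n _).1 hb2).1 x hx |>.1) h
      apply Subtype.ext
      simp [this.1, this.2]
    · rintro ⟨P, hP⟩
      obtain ⟨l, l', hl, hl', rfl⟩ := (tiling_iff n P).1 hP
      exact ⟨⟨(l, l'), Finset.mem_product.2 ⟨(mem_compF n l).2 hl, (mem_compF n l').2 hl'⟩⟩, rfl⟩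
  rw [← Nat.card_congr (Equiv.ofBijective _ hbij), Nat.card_eq_finsetCard,
    Finset.card_product]

lemma card_compF_T (T : ℕ → ℤ) (hT0 : T 0 = 0) (hT1 : T 1 = 0) (hT2 : T 2 = 1)
    (hTrec : ∀ n, T (n + 3) = T (n + 2) + T (n + 1) + T n) :
    ∀ n, ((compF n).card : ℤ) = T (n + 2) := by
  have h3 : T 3 = 1 := by
    have := hTrec 0; norm_num at this; rw [this, hT0, hT1, hT2]; ring
  have h4 : T 4 = 2 := by
    have := hTrec 1; norm_num at this; rw [this, h3, hT1, hT2]; ring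
  intro n
  induction n using Nat.strong_induction_on with
  | _ n ih =>
    match n with
    | 0 => simp [compF, hT2]
    | 1 => simp [compF]; omega
    | 2 =>
        rw [show (2 : ℕ) + 2 = 4 from rfl, h4]
        norm_num [compF]
    | (n + 3) =>
        rw [card_compF_rec n]
        push_cast
        rw [ih (n + 2) (by omega), ih (n + 1) (by omega), ih n (by omega)]
        have e1 : n + 3 + 2 = n + 2 + 3 := by omega
        have e2 : n + 2 + 1 = n + 1 + 2 := by omega
        rw [e1, hTrec (n + 2), e2]

end CombAux

/-- Theorem 2 of the paper: the number of tilings of an n-board with half-squares,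
(1/2,1/2;2)-combs, and (1/2,1/2;3)-combs is T_{n+2}². -/
theorem stmt_15 (T : ℕ → ℤ) (hT0 : T 0 = 0) (hT1 : T 1 = 0) (hT2 : T 2 = 1)
    (hTrec : ∀ n, T (n + 3) = T (n + 2) + T (n + 1) + T n) :
    ∀ n : ℕ, (Nat.card {P : Finset (ℕ × ℕ) // IsCombTiling n P} : ℤ) = (T (n + 2))^2 := by
  intro n
  rw [CombAux.card_eq n]
  push_cast
  rw [CombAux.card_compF_T T hT0 hT1 hT2 hTrec n]
  ring
end

section
/- Let T be the tribonacci sequence (T_0 = T_1 = 0, T_2 = 1, T_n = T_{n-1} + T_{n-2} + T_{n-3}). Then for all n ≥ 0, T_{n+2}^2 = δ_{n,0} + T_{n+1}^2 + 3T_n^2 + 9T_{n-1}^2 + ∑_{l=4}^{n} [4(T_l + T_{l-1}) − 2δ_{l,2}] · T_{n-l+2}^2, where T at negative indices is 0 and the sum is empty for n < 4. -/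
open Finset

private lemma trib_sum_form (T : ℕ → ℤ) (n : ℕ) :
    ∑ l ∈ Finset.Icc 4 n,
        (4 * (T l + T (l - 1)) - 2 * (if l = 2 then 1 else 0)) * (T (n - l + 2))^2
      = ∑ k ∈ Finset.range (n - 3), 4 * (T (n - k) + T (n - k - 1)) * (T (k + 2))^2 := by
  rw [show (∑ l ∈ Finset.Icc 4 n,
        (4 * (T l + T (l - 1)) - 2 * (if l = 2 then 1 else 0)) * (T (n - l + 2))^2)
      = ∑ l ∈ Finset.Icc 4 n, 4 * (T l + T (l - 1)) * (T (n - l + 2))^2 from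
    Finset.sum_congr rfl (fun l hl => by
      simp only [Finset.mem_Icc] at hl
      have : l ≠ 2 := by omega
      simp [this])]
  apply Finset.sum_nbij' (i := fun l => n - l) (j := fun k => n - k)
  · intro a ha; simp only [Finset.mem_Icc] at ha; simp only [Finset.mem_range]; omega
  · intro a ha; simp only [Finset.mem_range] at ha; simp only [Finset.mem_Icc]; omega
  · intro a ha; simp only [Finset.mem_Icc] at ha; omega
  · intro a ha; simp only [Finset.mem_range] at ha; omega
  · intro a ha; simp only [Finset.mem_Icc] at ha
    have h1 : n - (n - a) = a := by omega
    rw [h1]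

private lemma trib_conv_shift (c B : ℕ → ℤ)
    (hc : ∀ m, c (m + 4) = c (m + 3) + c (m + 2) + c (m + 1)) (m : ℕ) :
    ∑ k ∈ Finset.range (m + 4), c (m + 7 - k) * B k
      = (∑ k ∈ Finset.range (m + 3), c (m + 6 - k) * B k)
        + (∑ k ∈ Finset.range (m + 2), c (m + 5 - k) * B k)
        + (∑ k ∈ Finset.range (m + 1), c (m + 4 - k) * B k)
        + c 3 * (B (m + 3) + B (m + 2) + B (m + 1))
        + c 2 * (B (m + 3) + B (m + 2)) + c 1 * B (m + 3) := by
  have key : ∀ k ∈ Finset.range (m + 4), c (m + 7 - k) * B k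
      = c (m + 6 - k) * B k + c (m + 5 - k) * B k + c (m + 4 - k) * B k := by
    intro k hk
    simp only [Finset.mem_range] at hk
    have h1 : m + 7 - k = (m + 3 - k) + 4 := by omega
    have h2 : m + 6 - k = (m + 3 - k) + 3 := by omega
    have h3 : m + 5 - k = (m + 3 - k) + 2 := by omega
    have h4 : m + 4 - k = (m + 3 - k) + 1 := by omega
    rw [h1, h2, h3, h4, hc]; ring
  rw [Finset.sum_congr rfl key]
  rw [Finset.sum_add_distrib, Finset.sum_add_distrib]
  rw [Finset.sum_range_succ (f := fun k => c (m + 6 - k) * B k) (m + 3)]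
  rw [Finset.sum_range_succ (f := fun k => c (m + 5 - k) * B k) (m + 3),
      Finset.sum_range_succ (f := fun k => c (m + 5 - k) * B k) (m + 2)]
  rw [Finset.sum_range_succ (f := fun k => c (m + 4 - k) * B k) (m + 3),
      Finset.sum_range_succ (f := fun k => c (m + 4 - k) * B k) (m + 2),
      Finset.sum_range_succ (f := fun k => c (m + 4 - k) * B k) (m + 1)]
  have e1 : m + 6 - (m + 3) = 3 := by omega
  have e2 : m + 5 - (m + 3) = 2 := by omega
  have e3 : m + 5 - (m + 2) = 3 := by omega
  have e4 : m + 4 - (m + 3) = 1 := by omega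
  have e5 : m + 4 - (m + 2) = 2 := by omega
  have e6 : m + 4 - (m + 1) = 3 := by omega
  rw [e1, e2, e3, e4, e5, e6]; ring

/-- Lemma 6 of the paper (recursion for A_n = T_{n+2}², conditioning on the last metatile). -/
theorem stmt_18 (T : ℕ → ℤ) (hT0 : T 0 = 0) (hT1 : T 1 = 0) (hT2 : T 2 = 1)
    (hTrec : ∀ n, T (n + 3) = T (n + 2) + T (n + 1) + T n) :
    ∀ n : ℕ, (T (n + 2))^2 = (if n = 0 then 1 else 0) + (T (n + 1))^2 + 3 * (T n)^2
      + 9 * (T (n - 1))^2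
      + ∑ l ∈ Finset.Icc 4 n,
          (4 * (T l + T (l - 1)) - 2 * (if l = 2 then 1 else 0)) * (T (n - l + 2))^2 := by
  have tv3 : T 3 = 1 := by have h := hTrec 0; norm_num at h; omega
  have tv4 : T 4 = 2 := by have h := hTrec 1; norm_num at h; omega
  have tv5 : T 5 = 4 := by have h := hTrec 2; norm_num at h; omega
  have tv6 : T 6 = 7 := by have h := hTrec 3; norm_num at h; omega
  have tv7 : T 7 = 13 := by have h := hTrec 4; norm_num at h; omega
  have tv8 : T 8 = 24 := by have h := hTrec 5; norm_num at h; omega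
  intro n
  induction n using Nat.strong_induction_on with
  | _ n ih =>
    by_cases h7 : n < 7
    · interval_cases n
      · rw [show Finset.Icc 4 0 = ∅ from by decide]; norm_num [hT0, hT1, hT2]
      · rw [show Finset.Icc 4 1 = ∅ from by decide]; norm_num [hT0, hT1, hT2, tv3]
      · rw [show Finset.Icc 4 2 = ∅ from by decide]; norm_num [hT1, hT2, tv3, tv4]
      · rw [show Finset.Icc 4 3 = ∅ from by decide]; norm_num [hT2, tv3, tv4, tv5]
      · rw [show Finset.Icc 4 4 = {4} from by decide]
        norm_num [tv3, tv4, tv5, tv6, hT2]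
      · rw [show Finset.Icc 4 5 = {4, 5} from by decide]
        norm_num [tv3, tv4, tv5, tv6, tv7, hT2]
      · rw [show Finset.Icc 4 6 = {4, 5, 6} from by decide]
        norm_num [tv3, tv4, tv5, tv6, tv7, tv8, hT2]
    · obtain ⟨m, rfl⟩ : ∃ m, n = m + 7 := ⟨n - 7, by omega⟩
      have hc : ∀ j, (fun l => (4 : ℤ) * (T l + T (l - 1))) (j + 4)
          = (fun l => (4 : ℤ) * (T l + T (l - 1))) (j + 3)
            + (fun l => (4 : ℤ) * (T l + T (l - 1))) (j + 2)
            + (fun l => (4 : ℤ) * (T l + T (l - 1))) (j + 1) := by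
        intro j
        simp only
        have e1 : j + 4 - 1 = j + 3 := by omega
        have e2 : j + 3 - 1 = j + 2 := by omega
        have e3 : j + 2 - 1 = j + 1 := by omega
        have e4 : j + 1 - 1 = j := by omega
        rw [e1, e2, e3, e4]
        have r1 : T (j + 4) = T (j + 3) + T (j + 2) + T (j + 1) := hTrec (j + 1)
        have r2 : T (j + 3) = T (j + 2) + T (j + 1) + T j := hTrec j
        rw [r1, r2]; ring
      have hconv := trib_conv_shift (fun l => 4 * (T l + T (l - 1)))
        (fun k => (T (k + 2))^2) hc m
      have IH6 := ih (m + 6) (by omega)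
      have IH5 := ih (m + 5) (by omega)
      have IH4 := ih (m + 4) (by omega)
      rw [trib_sum_form] at IH6 IH5 IH4
      rw [if_neg (show ¬ (m + 6 = 0) from by omega)] at IH6
      rw [if_neg (show ¬ (m + 5 = 0) from by omega)] at IH5
      rw [if_neg (show ¬ (m + 4 = 0) from by omega)] at IH4
      rw [show m + 6 - 3 = m + 3 from by omega] at IH6
      rw [show m + 5 - 3 = m + 2 from by omega] at IH5
      rw [show m + 4 - 3 = m + 1 from by omega] at IH4
      rw [show m + 6 - 1 = m + 5 from by omega] at IH6
      rw [show m + 5 - 1 = m + 4 from by omega] at IH5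
      rw [show m + 4 - 1 = m + 3 from by omega] at IH4
      rw [show m + 6 + 2 = m + 8 from by omega, show m + 6 + 1 = m + 7 from by omega] at IH6
      rw [show m + 5 + 2 = m + 7 from by omega, show m + 5 + 1 = m + 6 from by omega] at IH5
      rw [show m + 4 + 2 = m + 6 from by omega, show m + 4 + 1 = m + 5 from by omega] at IH4
      rw [trib_sum_form, if_neg (show ¬ (m + 7 = 0) from by omega)]
      rw [show m + 7 - 3 = m + 4 from by omega, show m + 7 - 1 = m + 6 from by omega]
      rw [show m + 7 + 2 = m + 9 from by omega, show m + 7 + 1 = m + 8 from by omega]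
      rw [hconv]
      have c3 : (4 : ℤ) * (T 3 + T (3 - 1)) = 8 := by norm_num [tv3, hT2]
      have c2 : (4 : ℤ) * (T 2 + T (2 - 1)) = 4 := by norm_num [hT2, hT1]
      have c1 : (4 : ℤ) * (T 1 + T (1 - 1)) = 0 := by norm_num [hT1, hT0]
      rw [c3, c2, c1]
      have h9 : T (m + 9) = T (m + 8) + T (m + 7) + T (m + 6) := hTrec (m + 6)
      have h8 : T (m + 8) = T (m + 7) + T (m + 6) + T (m + 5) := hTrec (m + 5)
      have h7' : T (m + 7) = T (m + 6) + T (m + 5) + T (m + 4) := hTrec (m + 4)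
      have h6 : T (m + 6) = T (m + 5) + T (m + 4) + T (m + 3) := hTrec (m + 3)
      have h5 : T (m + 5) = T (m + 4) + T (m + 3) + T (m + 2) := hTrec (m + 2)
      have h4 : T (m + 4) = T (m + 3) + T (m + 2) + T (m + 1) := hTrec (m + 1)
      have key : (T (m + 9))^2 = 2 * (T (m + 8))^2 + 3 * (T (m + 7))^2
          + 6 * (T (m + 6))^2 - (T (m + 5))^2 - (T (m + 3))^2 := by
        rw [h9, h8, h7', h6, h5, h4]; ring
      linarith [IH6, IH5, IH4, key]
end
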